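/- arXiv:2105.09785 — 5 statements merged into one kernel-verified Lean document; each statement's English description precedes it below -/
import Mathlib

section
/- Let α, β ∈ ℝ \ ℤ with α − β ∉ ℤ, and let f, g be C^K functions on (−δ, δ) with K > −min(α, β). If there exists c ∈ ℝ such that x^α f(x) + x^β g(x) = c for all x ∈ (0, δ), then c = 0. -/
open Filter Set Topology

lemma rpow_tendsto {p : ℝ} (hp : 0 < p) :
    Tendsto (fun x : ℝ => x ^ p) (𝓝[>] (0:ℝ)) (𝓝 0) := by
  have h := (Real.continuousAt_rpow_const 0 p (Or.inr hp.le)).tendsto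
  rw [Real.zero_rpow hp.ne'] at h
  exact h.mono_left nhdsWithin_le_nhds

lemma key (c : ℝ → ℝ) (s : Finset ℝ)
    (h : Tendsto (fun x => ∑ γ ∈ s, c γ * x ^ γ) (𝓝[>] (0:ℝ)) (𝓝 0)) :
    ∀ γ ∈ s, γ ≤ 0 → c γ = 0 := by
  induction s using Finset.strongInduction with
  | _ s ih =>
    intro γ hγs hγ0
    have hne : s.Nonempty := ⟨γ, hγs⟩
    set γ₀ := s.min' hne with hγ₀def
    have hγ₀s : γ₀ ∈ s := s.min'_mem hne
    have hγ₀0 : γ₀ ≤ 0 := le_trans (s.min'_le γ hγs) hγ0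
    -- the rescaled sum tends to c γ₀
    have h1 : Tendsto (fun x : ℝ => x ^ (-γ₀) * ∑ γ ∈ s, c γ * x ^ γ)
        (𝓝[>] (0:ℝ)) (𝓝 (c γ₀)) := by
      have heq : ∀ᶠ x in 𝓝[>] (0:ℝ),
          x ^ (-γ₀) * ∑ γ' ∈ s, c γ' * x ^ γ' = ∑ γ' ∈ s, c γ' * x ^ (γ' - γ₀) := by
        filter_upwards [self_mem_nhdsWithin] with x hx
        rw [Finset.mul_sum]
        refine Finset.sum_congr rfl fun γ' _ => ?_
        rw [show γ' - γ₀ = -γ₀ + γ' by ring, Real.rpow_add hx]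
        ring
      have hlim : Tendsto (fun x : ℝ => ∑ γ' ∈ s, c γ' * x ^ (γ' - γ₀))
          (𝓝[>] (0:ℝ)) (𝓝 (∑ γ' ∈ s, if γ' = γ₀ then c γ₀ else 0)) := by
        refine tendsto_finset_sum _ fun γ' hγ' => ?_
        by_cases hcase : γ' = γ₀
        · subst hcase
          simp only [sub_self, if_pos rfl]
          simpa [Real.rpow_zero] using
            (tendsto_const_nhds : Tendsto (fun _ : ℝ => c γ') (𝓝[>] (0:ℝ)) (𝓝 (c γ')))
        · have hpos : 0 < γ' - γ₀ :=
            sub_pos.mpr (lt_of_le_of_ne (s.min'_le γ' hγ') (Ne.symm (by simpa using hcase)))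
          rw [if_neg hcase]
          simpa using (rpow_tendsto hpos).const_mul (c γ')
      rw [Finset.sum_ite_eq' s γ₀ (fun _ => c γ₀), if_pos hγ₀s] at hlim
      exact hlim.congr' (Filter.EventuallyEq.symm heq)
    have h2 : Tendsto (fun x : ℝ => x ^ (-γ₀) * ∑ γ ∈ s, c γ * x ^ γ)
        (𝓝[>] (0:ℝ)) (𝓝 0) := by
      refine squeeze_zero_norm' ?_ (by simpa using h.norm)
      filter_upwards [Ioo_mem_nhdsGT_of_mem (⟨le_refl (0:ℝ), one_pos⟩ : (0:ℝ) ∈ Ico (0:ℝ) 1)]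
        with x hx
      rw [norm_mul]
      have h01 : ‖x ^ (-γ₀)‖ ≤ 1 := by
        rw [Real.norm_eq_abs, abs_of_nonneg (Real.rpow_nonneg hx.1.le _)]
        exact Real.rpow_le_one hx.1.le hx.2.le (neg_nonneg.mpr hγ₀0)
      calc ‖x ^ (-γ₀)‖ * ‖∑ γ ∈ s, c γ * x ^ γ‖
          ≤ 1 * ‖∑ γ ∈ s, c γ * x ^ γ‖ := by
            exact mul_le_mul_of_nonneg_right h01 (norm_nonneg _)
        _ = ‖∑ γ ∈ s, c γ * x ^ γ‖ := one_mul _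
    have hc0 : c γ₀ = 0 := tendsto_nhds_unique h1 h2
    by_cases hcase : γ = γ₀
    · rw [hcase]; exact hc0
    · refine ih (s.erase γ₀) (Finset.erase_ssubset hγ₀s) ?_ γ
        (Finset.mem_erase.mpr ⟨hcase, hγs⟩) hγ0
      refine h.congr fun x => ?_
      rw [← Finset.add_sum_erase s _ hγ₀s, hc0, zero_mul, zero_add]

/-- If `α, β ∉ ℤ`, `α − β ∉ ℤ`, `f, g` are `C^K` on `(−δ, δ)` with `K > −min(α, β)`
and `x^α f(x) + x^β g(x) = c` on `(0, δ)`, then `c = 0`. -/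
theorem stmt2 (α β : ℝ) (hα : ∀ n : ℤ, α ≠ n) (hβ : ∀ n : ℤ, β ≠ n)
    (hαβ : ∀ n : ℤ, α - β ≠ n) (δ : ℝ) (hδ : 0 < δ) (K : ℕ)
    (hK : -min α β < K) (f g : ℝ → ℝ)
    (hf : ContDiffOn ℝ K f (Set.Ioo (-δ) δ))
    (hg : ContDiffOn ℝ K g (Set.Ioo (-δ) δ))
    (c : ℝ) (hc : ∀ x ∈ Set.Ioo (0 : ℝ) δ, x ^ α * f x + x ^ β * g x = c) :
    c = 0 := by
  have hKα : -α < (K:ℝ) := lt_of_le_of_lt (neg_le_neg (min_le_left α β)) hK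
  have hKβ : -β < (K:ℝ) := lt_of_le_of_lt (neg_le_neg (min_le_right α β)) hK
  have h0mem : (0:ℝ) ∈ Set.Ioo (-δ) δ := ⟨neg_lt_zero.mpr hδ, hδ⟩
  rcases K with _ | n
  · -- K = 0 : both exponents positive, direct limit argument
    have hαpos : 0 < α := by push_cast at hKα; linarith
    have hβpos : 0 < β := by push_cast at hKβ; linarith
    have hfc : Tendsto f (𝓝[>] (0:ℝ)) (𝓝 (f 0)) :=
      ((hf.continuousOn.continuousAt (Ioo_mem_nhds h0mem.1 h0mem.2)).tendsto).mono_left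
        nhdsWithin_le_nhds
    have hgc : Tendsto g (𝓝[>] (0:ℝ)) (𝓝 (g 0)) :=
      ((hg.continuousOn.continuousAt (Ioo_mem_nhds h0mem.1 h0mem.2)).tendsto).mono_left
        nhdsWithin_le_nhds
    have h1 : Tendsto (fun x : ℝ => x ^ α * f x + x ^ β * g x) (𝓝[>] (0:ℝ)) (𝓝 0) := by
      have := ((rpow_tendsto hαpos).mul hfc).add ((rpow_tendsto hβpos).mul hgc)
      simpa using this
    have h2 : Tendsto (fun x : ℝ => x ^ α * f x + x ^ β * g x) (𝓝[>] (0:ℝ)) (𝓝 c) := by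
      refine Tendsto.congr' ?_ (tendsto_const_nhds : Tendsto (fun _ : ℝ => c) _ _)
      filter_upwards [Ioo_mem_nhdsGT_of_mem (⟨le_refl (0:ℝ), hδ⟩ : (0:ℝ) ∈ Set.Ico 0 δ)]
        with x hx
      exact (hc x hx).symm
    exact (tendsto_nhds_unique h2 h1)
  · -- K = n + 1 : Taylor expansion argument
    set K := n + 1 with hKdef
    set b : ℝ := δ / 2 with hbdef
    have hb : 0 < b := half_pos hδ
    have hbδ : b < δ := half_lt_self hδ
    have hIcc : Set.Icc (0:ℝ) b ⊆ Set.Ioo (-δ) δ := fun x hx =>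
      ⟨lt_of_lt_of_le (neg_lt_zero.mpr hδ) hx.1, lt_of_le_of_lt hx.2 hbδ⟩
    obtain ⟨Cf, hCf⟩ := exists_taylor_mean_remainder_bound hb.le (hf.mono hIcc)
    obtain ⟨Cg, hCg⟩ := exists_taylor_mean_remainder_bound hb.le (hg.mono hIcc)
    set A : ℕ → ℝ := fun j => (Nat.factorial j : ℝ)⁻¹ * iteratedDerivWithin j f (Set.Icc 0 b) 0 with hA
    set B : ℕ → ℝ := fun j => (Nat.factorial j : ℝ)⁻¹ * iteratedDerivWithin j g (Set.Icc 0 b) 0 with hB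
    set cc : ℝ → ℝ := fun γ =>
      (∑ j ∈ Finset.range K, if γ = α + j then A j else 0)
      + (∑ j ∈ Finset.range K, if γ = β + j then B j else 0)
      + (if γ = 0 then -c else 0) with hcc
    set s : Finset ℝ := ((Finset.range K).image fun j : ℕ => α + (j:ℝ))
      ∪ ((Finset.range K).image fun j : ℕ => β + (j:ℝ)) ∪ {0} with hs
    have h0s : (0:ℝ) ∈ s := by
      simp [hs]
    have hmemα : ∀ j ∈ Finset.range K, α + (j:ℝ) ∈ s := fun j hj => by
      simp only [hs, Finset.mem_union, Finset.mem_image]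
      exact Or.inl (Or.inl ⟨j, hj, rfl⟩)
    have hmemβ : ∀ j ∈ Finset.range K, β + (j:ℝ) ∈ s := fun j hj => by
      simp only [hs, Finset.mem_union, Finset.mem_image]
      exact Or.inl (Or.inr ⟨j, hj, rfl⟩)
    -- the sum over s is the full expansion
    have hGrepr : ∀ x : ℝ, 0 < x → (∑ γ ∈ s, cc γ * x ^ γ)
        = (∑ j ∈ Finset.range K, A j * x ^ (α + j))
          + (∑ j ∈ Finset.range K, B j * x ^ (β + j)) - c := by
      intro x hx
      have hsplit : ∀ γ ∈ s, cc γ * x ^ γ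
          = (∑ j ∈ Finset.range K, if γ = α + j then A j * x ^ γ else 0)
            + (∑ j ∈ Finset.range K, if γ = β + j then B j * x ^ γ else 0)
            + (if γ = 0 then -c * x ^ γ else 0) := by
        intro γ _
        simp only [hcc, add_mul, Finset.sum_mul, ite_mul, zero_mul]
      rw [Finset.sum_congr rfl hsplit]
      rw [Finset.sum_add_distrib, Finset.sum_add_distrib]
      congr 1
      · congr 1
        · rw [Finset.sum_comm]
          refine Finset.sum_congr rfl fun j hj => ?_
          rw [Finset.sum_ite_eq' s (α + (j:ℝ)) (fun γ => A j * x ^ γ), if_pos (hmemα j hj)]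
        · rw [Finset.sum_comm]
          refine Finset.sum_congr rfl fun j hj => ?_
          rw [Finset.sum_ite_eq' s (β + (j:ℝ)) (fun γ => B j * x ^ γ), if_pos (hmemβ j hj)]
      · rw [Finset.sum_ite_eq' s (0:ℝ) (fun γ => -c * x ^ γ), if_pos h0s,
          Real.rpow_zero, mul_one]
    -- relate the sum to the Taylor remainders
    have hGrem : ∀ x ∈ Set.Ioo (0:ℝ) b, (∑ γ ∈ s, cc γ * x ^ γ)
        = -(x ^ α * (f x - taylorWithinEval f n (Set.Icc 0 b) 0 x)
            + x ^ β * (g x - taylorWithinEval g n (Set.Icc 0 b) 0 x)) := by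
      intro x hx
      have hxpos : 0 < x := hx.1
      have hTf : x ^ α * taylorWithinEval f n (Set.Icc 0 b) 0 x
          = ∑ j ∈ Finset.range K, A j * x ^ (α + (j:ℝ)) := by
        rw [taylor_within_apply, Finset.mul_sum]
        refine Finset.sum_congr rfl fun j hj => ?_
        rw [Real.rpow_add hxpos, Real.rpow_natCast]
        simp only [smul_eq_mul, sub_zero, hA]
        ring
      have hTg : x ^ β * taylorWithinEval g n (Set.Icc 0 b) 0 x
          = ∑ j ∈ Finset.range K, B j * x ^ (β + (j:ℝ)) := by
        rw [taylor_within_apply, Finset.mul_sum]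
        refine Finset.sum_congr rfl fun j hj => ?_
        rw [Real.rpow_add hxpos, Real.rpow_natCast]
        simp only [smul_eq_mul, sub_zero, hB]
        ring
      have hcx : x ^ α * f x + x ^ β * g x = c :=
        hc x ⟨hxpos, lt_trans hx.2 hbδ⟩
      rw [hGrepr x hxpos, ← hTf, ← hTg]
      rw [mul_sub, mul_sub]
      linarith [hcx]
    -- the sum tends to 0
    have hαK : 0 < α + K := by linarith
    have hβK : 0 < β + K := by linarith
    have hGtendsto : Tendsto (fun x => ∑ γ ∈ s, cc γ * x ^ γ) (𝓝[>] (0:ℝ)) (𝓝 0) := by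
      refine squeeze_zero_norm'
        (a := fun x => Cf * x ^ (α + (K:ℝ)) + Cg * x ^ (β + (K:ℝ))) ?_ ?_
      · filter_upwards [Ioo_mem_nhdsGT_of_mem (⟨le_refl (0:ℝ), hb⟩ : (0:ℝ) ∈ Set.Ico 0 b)]
          with x hx
        have hxpos : 0 < x := hx.1
        have hxmem : x ∈ Set.Icc (0:ℝ) b := ⟨hxpos.le, hx.2.le⟩
        have h1 : ‖x ^ α * (f x - taylorWithinEval f n (Set.Icc 0 b) 0 x)‖
            ≤ Cf * x ^ (α + (K:ℝ)) := by
          rw [norm_mul, Real.norm_eq_abs, abs_of_nonneg (Real.rpow_nonneg hxpos.le _),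
            Real.rpow_add hxpos, Real.rpow_natCast]
          calc x ^ α * ‖f x - taylorWithinEval f n (Set.Icc 0 b) 0 x‖
              ≤ x ^ α * (Cf * (x - 0) ^ (n + 1)) :=
                mul_le_mul_of_nonneg_left (hCf x hxmem) (Real.rpow_nonneg hxpos.le _)
            _ = Cf * (x ^ α * x ^ (K:ℕ)) := by rw [sub_zero]; ring
        have h2 : ‖x ^ β * (g x - taylorWithinEval g n (Set.Icc 0 b) 0 x)‖
            ≤ Cg * x ^ (β + (K:ℝ)) := by
          rw [norm_mul, Real.norm_eq_abs, abs_of_nonneg (Real.rpow_nonneg hxpos.le _),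
            Real.rpow_add hxpos, Real.rpow_natCast]
          calc x ^ β * ‖g x - taylorWithinEval g n (Set.Icc 0 b) 0 x‖
              ≤ x ^ β * (Cg * (x - 0) ^ (n + 1)) :=
                mul_le_mul_of_nonneg_left (hCg x hxmem) (Real.rpow_nonneg hxpos.le _)
            _ = Cg * (x ^ β * x ^ (K:ℕ)) := by rw [sub_zero]; ring
        rw [hGrem x hx, norm_neg]
        calc ‖x ^ α * (f x - taylorWithinEval f n (Set.Icc 0 b) 0 x)
              + x ^ β * (g x - taylorWithinEval g n (Set.Icc 0 b) 0 x)‖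
            ≤ ‖x ^ α * (f x - taylorWithinEval f n (Set.Icc 0 b) 0 x)‖
              + ‖x ^ β * (g x - taylorWithinEval g n (Set.Icc 0 b) 0 x)‖ := norm_add_le _ _
          _ ≤ Cf * x ^ (α + (K:ℝ)) + Cg * x ^ (β + (K:ℝ)) := add_le_add h1 h2
      · have := ((rpow_tendsto hαK).const_mul Cf).add ((rpow_tendsto hβK).const_mul Cg)
        simpa using this
    -- apply the key lemma at exponent 0
    have hcc0 : cc 0 = 0 := key cc s hGtendsto 0 h0s (le_refl 0)
    have e1 : (∑ j ∈ Finset.range K, if (0:ℝ) = α + (j:ℝ) then A j else 0) = 0 := by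
      refine Finset.sum_eq_zero fun j hj => ?_
      rw [if_neg]
      intro hcontra
      exact hα (-(j:ℤ)) (by push_cast; linarith)
    have e2 : (∑ j ∈ Finset.range K, if (0:ℝ) = β + (j:ℝ) then B j else 0) = 0 := by
      refine Finset.sum_eq_zero fun j hj => ?_
      rw [if_neg]
      intro hcontra
      exact hβ (-(j:ℤ)) (by push_cast; linarith)
    rw [hcc] at hcc0
    simp only [e1, e2, if_pos rfl, if_true, zero_add] at hcc0
    linarith
end

section
/- Let Φ(x,y) be a continuous function in a neighbourhood of (0,0) ∈ ℝ^N × ℝ. If the function (x,y) ↦ y·Φ(x,y) is real analytic in a neighbourhood of (0,0), then Φ itself is real analytic in a neighbourhood of (0,0). -/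
open Filter Finset
open scoped ENNReal NNReal Topology

namespace Stmt3Aux

variable {N : ℕ}

/-- The projection `(x, y) ↦ (x, 0)`. -/
noncomputable def Amap (N : ℕ) : ((Fin N → ℝ) × ℝ) →L[ℝ] ((Fin N → ℝ) × ℝ) :=
  (ContinuousLinearMap.fst ℝ (Fin N → ℝ) ℝ).prod 0

/-- The projection `(x, y) ↦ (0, y)`. -/
noncomputable def Bmap (N : ℕ) : ((Fin N → ℝ) × ℝ) →L[ℝ] ((Fin N → ℝ) × ℝ) :=
  (0 : ((Fin N → ℝ) × ℝ) →L[ℝ] (Fin N → ℝ)).prod (ContinuousLinearMap.snd ℝ (Fin N → ℝ) ℝ)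

def evec (N : ℕ) : (Fin N → ℝ) × ℝ := (0, 1)

lemma Amap_apply (v : (Fin N → ℝ) × ℝ) : Amap N v = (v.1, 0) := rfl

lemma Bmap_apply (v : (Fin N → ℝ) × ℝ) : Bmap N v = (0, v.2) := rfl

lemma Bmap_eq_smul (v : (Fin N → ℝ) × ℝ) : Bmap N v = v.2 • evec N := by
  simp [Bmap_apply, evec, Prod.ext_iff]

lemma norm_evec : ‖evec N‖ = 1 := by
  simp [evec, Prod.norm_def]

lemma norm_Amap_apply_le (v : (Fin N → ℝ) × ℝ) : ‖Amap N v‖ ≤ ‖v‖ := by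
  rw [Amap_apply, Prod.norm_def, Prod.norm_def]
  simp only [norm_zero]
  exact max_le (le_max_left _ _) (le_trans (norm_nonneg _) (le_max_left _ _))

lemma norm_Bmap_apply_le (v : (Fin N → ℝ) × ℝ) : ‖Bmap N v‖ ≤ ‖v‖ := by
  rw [Bmap_apply, Prod.norm_def, Prod.norm_def]
  simp only [norm_zero]
  exact max_le (le_trans (norm_nonneg _) (le_max_right _ _)) (le_max_right _ _)

lemma norm_Amap_le : ‖Amap N‖ ≤ 1 :=
  ContinuousLinearMap.opNorm_le_bound _ zero_le_one fun w => by
    rw [one_mul]; exact norm_Amap_apply_le w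

lemma norm_Bmap_le : ‖Bmap N‖ ≤ 1 :=
  ContinuousLinearMap.opNorm_le_bound _ zero_le_one fun w => by
    rw [one_mul]; exact norm_Bmap_apply_le w

lemma card_compl_singleton (n : ℕ) (j : Fin (n + 1)) :
    #({j}ᶜ : Finset (Fin (n + 1))) = n := by
  simp [Finset.card_compl]

/-- The `s`-term of the "series of `f` divided by `y`". -/
noncomputable def T (p : FormalMultilinearSeries ℝ ((Fin N → ℝ) × ℝ) ℝ) (n : ℕ)
    (s : Finset (Fin (n + 1))) (hs : s.Nonempty) :
    ContinuousMultilinearMap ℝ (fun _ : Fin n => (Fin N → ℝ) × ℝ) ℝ :=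
  ((p (n + 1)).restr ({s.min' hs}ᶜ) (card_compl_singleton n _) (evec N)).compContinuousLinearMap
    (fun i => if ((((({s.min' hs}ᶜ : Finset (Fin (n + 1)))).orderIsoOfFin
        (card_compl_singleton n _)) i : Fin (n + 1)) ∈ s) then Bmap N else Amap N)

lemma restr_apply' {k n : ℕ}
    (f : ContinuousMultilinearMap ℝ (fun _ : Fin n => (Fin N → ℝ) × ℝ) ℝ)
    (s : Finset (Fin n)) (hk : #s = k) (z : (Fin N → ℝ) × ℝ) (m : Fin k → (Fin N → ℝ) × ℝ) :
    f.restr s hk z m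
      = f (fun j => if h : j ∈ s then m ((s.orderIsoOfFin hk).symm ⟨j, h⟩) else z) := rfl

lemma T_apply (p : FormalMultilinearSeries ℝ ((Fin N → ℝ) × ℝ) ℝ) (n : ℕ)
    (s : Finset (Fin (n + 1))) (hs : s.Nonempty) (v : (Fin N → ℝ) × ℝ) :
    T p n s hs (fun _ => v)
      = v.2 ^ (#s - 1) * (p (n + 1)) (fun j => if j ∈ s then evec N else (v.1, 0)) := by
  classical
  set j₀ := s.min' hs with hj₀
  have hj₀s : j₀ ∈ s := s.min'_mem hs
  set sc : Finset (Fin (n + 1)) := {j₀}ᶜ with hsc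
  set iso := sc.orderIsoOfFin (card_compl_singleton n j₀) with hiso
  set m₀ : Fin (n + 1) → ((Fin N → ℝ) × ℝ) :=
    fun j => if j ∈ s then evec N else (v.1, 0) with hm₀
  have h1 : T p n s hs (fun _ => v)
      = (p (n + 1)) (fun j => if h : j ∈ sc
          then (if ((iso (iso.symm ⟨j, h⟩) : Fin (n + 1)) ∈ s) then Bmap N v else Amap N v)
          else evec N) := by
    rw [T, ContinuousMultilinearMap.compContinuousLinearMap_apply, restr_apply']
    simp only [apply_ite (fun (L : ((Fin N → ℝ) × ℝ) →L[ℝ] ((Fin N → ℝ) × ℝ)) => L v)]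
    rfl
  have harg : (fun j => if h : j ∈ sc
          then (if ((iso (iso.symm ⟨j, h⟩) : Fin (n + 1)) ∈ s) then Bmap N v else Amap N v)
          else evec N)
      = (s.erase j₀).piecewise (fun i => v.2 • m₀ i) m₀ := by
    funext j
    by_cases hj : j ∈ sc
    · have hiso' : (iso (iso.symm ⟨j, hj⟩) : Fin (n + 1)) = j := by
        rw [OrderIso.apply_symm_apply]
      rw [dif_pos hj, hiso']
      have hjne : j ≠ j₀ := by simpa [hsc, Finset.mem_compl] using hj
      by_cases hjs : j ∈ s
      · rw [if_pos hjs,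
          Finset.piecewise_eq_of_mem _ _ _ (Finset.mem_erase.2 ⟨hjne, hjs⟩)]
        simp [hm₀, hjs, Bmap_eq_smul]
      · rw [if_neg hjs,
          Finset.piecewise_eq_of_notMem _ _ _ (by simp [Finset.mem_erase, hjs])]
        simp [hm₀, hjs, Amap_apply]
    · have hj0 : j = j₀ := by simpa [hsc, Finset.mem_compl] using hj
      rw [dif_neg hj,
        Finset.piecewise_eq_of_notMem _ _ _ (by simp [Finset.mem_erase, hj0])]
      simp [hm₀, hj0, hj₀s]
  rw [h1, harg]
  have h2 := (p (n + 1)).toMultilinearMap.map_piecewise_smul (fun _ => v.2) m₀ (s.erase j₀)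
  have h3 : (p (n + 1)) ((s.erase j₀).piecewise (fun i => v.2 • m₀ i) m₀)
      = (∏ _i ∈ s.erase j₀, v.2) • (p (n + 1)) m₀ := h2
  rw [h3, Finset.prod_const, Finset.card_erase_of_mem hj₀s, smul_eq_mul]

/-- The candidate power series for `Φ` near a point of `{y = 0}`. -/
noncomputable def Q (p : FormalMultilinearSeries ℝ ((Fin N → ℝ) × ℝ) ℝ) :
    FormalMultilinearSeries ℝ ((Fin N → ℝ) × ℝ) ℝ :=
  fun n => ∑ s : Finset (Fin (n + 1)), if hs : s.Nonempty then T p n s hs else 0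

lemma Q_apply_diag (p : FormalMultilinearSeries ℝ ((Fin N → ℝ) × ℝ) ℝ) (n : ℕ)
    (v : (Fin N → ℝ) × ℝ) :
    v.2 * Q p n (fun _ => v)
      = p (n + 1) (fun _ => v) - p (n + 1) (fun _ => (v.1, 0)) := by
  classical
  set g : Finset (Fin (n + 1)) → ℝ :=
    fun s => p (n + 1) (s.piecewise (fun _ => Bmap N v) (fun _ => Amap N v)) with hg
  have hterm : ∀ (s : Finset (Fin (n + 1))) (hs : s.Nonempty),
      v.2 * T p n s hs (fun _ => v) = g s := by
    intro s hs
    rw [T_apply]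
    set m₀ : Fin (n + 1) → ((Fin N → ℝ) × ℝ) :=
      fun j => if j ∈ s then evec N else (v.1, 0) with hm₀
    have hpw : s.piecewise (fun _ => Bmap N v) (fun _ => Amap N v)
        = s.piecewise (fun i => v.2 • m₀ i) m₀ := by
      funext j
      by_cases hj : j ∈ s <;>
        simp [hj, hm₀, Bmap_eq_smul, Amap_apply]
    have h2 : g s = (∏ _i ∈ s, v.2) • (p (n + 1)) m₀ := by
      rw [hg]
      simp only []
      rw [hpw]
      exact (p (n + 1)).toMultilinearMap.map_piecewise_smul (fun _ => v.2) m₀ s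
    rw [h2, Finset.prod_const, smul_eq_mul, ← mul_assoc, ← pow_succ',
      Nat.sub_add_cancel hs.card_pos]
  have hL : v.2 * Q p n (fun _ => v)
      = ∑ s : Finset (Fin (n + 1)), (if hs : s.Nonempty then g s else 0) := by
    rw [Q, ContinuousMultilinearMap.sum_apply, Finset.mul_sum]
    refine Finset.sum_congr rfl fun s _ => ?_
    by_cases hs : s.Nonempty
    · rw [dif_pos hs, dif_pos hs, hterm s hs]
    · rw [dif_neg hs, dif_neg hs, ContinuousMultilinearMap.zero_apply, mul_zero]
  have hR : p (n + 1) (fun _ => v) = ∑ s : Finset (Fin (n + 1)), g s := by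
    have hv : (fun _ : Fin (n + 1) => v)
        = (fun _ : Fin (n + 1) => Bmap N v) + (fun _ : Fin (n + 1) => Amap N v) := by
      funext j
      simp [Bmap_apply, Amap_apply, Prod.ext_iff]
    rw [hv]
    exact (p (n + 1)).toMultilinearMap.map_add_univ _ _
  have hsplit : ∀ s : Finset (Fin (n + 1)),
      (if hs : s.Nonempty then g s else 0)
        = g s - (if s = (∅ : Finset (Fin (n + 1))) then g ∅ else 0) := by
    intro s
    by_cases hs : s.Nonempty
    · rw [dif_pos hs, if_neg hs.ne_empty, sub_zero]
    · have he : s = ∅ := Finset.not_nonempty_iff_eq_empty.1 hs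
      rw [dif_neg hs, if_pos he, he, sub_self]
  rw [hL, Finset.sum_congr rfl (fun s _ => hsplit s), Finset.sum_sub_distrib, ← hR]
  have hempty : ∑ s : Finset (Fin (n + 1)),
      (if s = (∅ : Finset (Fin (n + 1))) then g ∅ else 0) = g ∅ := by
    rw [Finset.sum_ite_eq' Finset.univ (∅ : Finset (Fin (n + 1))) (fun _ => g ∅)]
    simp
  rw [hempty]
  have : g ∅ = p (n + 1) (fun _ => (v.1, 0)) := by
    rw [hg]
    simp [Finset.piecewise_empty, Amap_apply]
  rw [this]

lemma T_norm_le (p : FormalMultilinearSeries ℝ ((Fin N → ℝ) × ℝ) ℝ) (n : ℕ)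
    (s : Finset (Fin (n + 1))) (hs : s.Nonempty) : ‖T p n s hs‖ ≤ ‖p (n + 1)‖ := by
  refine (ContinuousMultilinearMap.norm_compContinuousLinearMap_le _ _).trans ?_
  have h1 : ‖(p (n + 1)).restr ({s.min' hs}ᶜ) (card_compl_singleton n _) (evec N)‖
      ≤ ‖p (n + 1)‖ := by
    refine ((p (n + 1)).norm_restr _ _ _).trans ?_
    rw [norm_evec]
    simp
  have h2 : (∏ i : Fin n, ‖(if ((((({s.min' hs}ᶜ : Finset (Fin (n + 1)))).orderIsoOfFin
      (card_compl_singleton n _)) i : Fin (n + 1)) ∈ s) then Bmap N else Amap N)‖) ≤ 1 := by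
    refine Finset.prod_le_one (fun i _ => norm_nonneg _) (fun i _ => ?_)
    split
    · exact norm_Bmap_le
    · exact norm_Amap_le
  calc _ ≤ ‖p (n + 1)‖ * 1 :=
        mul_le_mul h1 h2 (Finset.prod_nonneg fun i _ => norm_nonneg _) (norm_nonneg _)
    _ = ‖p (n + 1)‖ := mul_one _

lemma Q_norm_le (p : FormalMultilinearSeries ℝ ((Fin N → ℝ) × ℝ) ℝ) (n : ℕ) :
    ‖Q p n‖ ≤ 2 ^ (n + 1) * ‖p (n + 1)‖ := by
  classical
  refine (norm_sum_le _ _).trans ?_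
  have hb : ∀ s ∈ (Finset.univ : Finset (Finset (Fin (n + 1)))),
      ‖if hs : s.Nonempty then T p n s hs else 0‖ ≤ ‖p (n + 1)‖ := by
    intro s _
    by_cases hs : s.Nonempty
    · rw [dif_pos hs]; exact T_norm_le p n s hs
    · rw [dif_neg hs]; simpa using norm_nonneg _
  calc ∑ s : Finset (Fin (n + 1)), ‖if hs : s.Nonempty then T p n s hs else 0‖
      ≤ (Finset.univ : Finset (Finset (Fin (n + 1)))).card • ‖p (n + 1)‖ :=
        Finset.sum_le_card_nsmul _ _ _ hb
    _ = 2 ^ (n + 1) * ‖p (n + 1)‖ := by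
        rw [Finset.card_univ, Fintype.card_finset, Fintype.card_fin, nsmul_eq_mul]
        norm_num

set_option maxHeartbeats 1000000 in
lemma Q_radius_pos (p : FormalMultilinearSeries ℝ ((Fin N → ℝ) × ℝ) ℝ)
    (hp : 0 < p.radius) : 0 < (Q p).radius := by
  obtain ⟨r0, hr00, hr0⟩ := ENNReal.lt_iff_exists_nnreal_btwn.1 hp
  have hr0pos : (0 : ℝ) < (r0 : ℝ) := by exact_mod_cast hr00
  have hsum := p.summable_norm_mul_pow hr0
  have hsum1 : Summable (fun n => ‖p (n + 1)‖ * (r0 : ℝ) ^ (n + 1)) :=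
    (summable_nat_add_iff 1).2 hsum
  have hsum2 : Summable (fun n => (2 / (r0 : ℝ)) * (‖p (n + 1)‖ * (r0 : ℝ) ^ (n + 1))) :=
    hsum1.mul_left _
  have hQsum : Summable (fun n => ‖Q p n‖ * ((r0 / 2 : ℝ≥0) : ℝ) ^ n) := by
    refine Summable.of_nonneg_of_le (fun n => by positivity) (fun n => ?_) hsum2
    have hcoe : ((r0 / 2 : ℝ≥0) : ℝ) = (r0 : ℝ) / 2 := by push_cast; ring
    rw [hcoe]
    have h1 : ‖Q p n‖ * ((r0 : ℝ) / 2) ^ n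
        ≤ (2 ^ (n + 1) * ‖p (n + 1)‖) * ((r0 : ℝ) / 2) ^ n :=
      mul_le_mul_of_nonneg_right (Q_norm_le p n) (by positivity)
    refine h1.trans_eq ?_
    field_simp
    have h2n : ((1 : ℝ) / 2) ^ n * 2 ^ n = 1 := by rw [← mul_pow]; norm_num
    linear_combination (‖p (n + 1)‖ * (r0 : ℝ) * (r0 : ℝ) ^ n * 2) * h2n
  have hle := (Q p).le_radius_of_summable_norm hQsum
  refine lt_of_lt_of_le ?_ hle
  have h0 : 0 < r0 := by exact_mod_cast hr00
  have : (0 : ℝ≥0) < r0 / 2 := div_pos h0 (by norm_num)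
  exact_mod_cast this

/-- Key lemma: at a point on `{y = 0}`, continuity of `Φ` plus analyticity of `y·Φ`
gives analyticity of `Φ`. -/
lemma key {Φ : (Fin N → ℝ) × ℝ → ℝ} {c : (Fin N → ℝ) × ℝ} (hc : c.2 = 0)
    (hU : ∀ᶠ z in 𝓝 c, ContinuousAt Φ z)
    (hf : AnalyticAt ℝ (fun q : (Fin N → ℝ) × ℝ => q.2 * Φ q) c) :
    AnalyticAt ℝ Φ c := by
  classical
  obtain ⟨p, hp⟩ := hf
  obtain ⟨r, hpr⟩ := hp
  have hprad : 0 < p.radius := lt_of_lt_of_le hpr.r_pos hpr.r_le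
  have hq : 0 < (Q p).radius := Q_radius_pos p hprad
  obtain ⟨δ₂, hδ₂pos, hδ₂⟩ := Metric.eventually_nhds_iff_ball.1 hU
  obtain ⟨δ₁, hδ₁nn, hδ₁0, hδ₁ρ⟩ := ENNReal.lt_iff_exists_real_btwn.1 (lt_min hpr.r_pos hq)
  have hδ₁pos : 0 < δ₁ := by
    rcases lt_or_ge 0 δ₁ with h | h
    · exact h
    · exfalso; rw [ENNReal.ofReal_eq_zero.2 h] at hδ₁0; exact lt_irrefl _ hδ₁0
  set δ : ℝ := min δ₁ δ₂ with hδdef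
  have hδpos : 0 < δ := lt_min hδ₁pos hδ₂pos
  have hδmin : ENNReal.ofReal δ ≤ min r (Q p).radius :=
    le_of_lt (lt_of_le_of_lt (ENNReal.ofReal_le_ofReal (min_le_left _ _)) hδ₁ρ)
  have hδr : ENNReal.ofReal δ ≤ r := le_trans hδmin (min_le_left _ _)
  have hδq : ENNReal.ofReal δ ≤ (Q p).radius := le_trans hδmin (min_le_right _ _)
  have hmem : ∀ (R : ℝ≥0∞), ENNReal.ofReal δ ≤ R → ∀ v : (Fin N → ℝ) × ℝ, ‖v‖ < δ →
      v ∈ Metric.eball (0 : (Fin N → ℝ) × ℝ) R := by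
    intro R hR v hv
    rw [Metric.mem_eball, edist_zero_right, ← ofReal_norm]
    exact lt_of_lt_of_le ((ENNReal.ofReal_lt_ofReal_iff hδpos).2 hv) hR
  have hp0 : ∀ w : Fin 0 → (Fin N → ℝ) × ℝ, p 0 w = 0 := by
    intro w
    simpa [hc] using hpr.coeff_zero w
  have claimA : ∀ v : (Fin N → ℝ) × ℝ, ‖v‖ < δ →
      v.2 * (Q p).sum v = v.2 * Φ (c + v) := by
    intro v hv
    have hv_r : v ∈ Metric.eball 0 r := hmem r hδr v hv
    have hv_q : v ∈ Metric.eball 0 (Q p).radius := hmem _ hδq v hv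
    have ha_norm : ‖((v.1, 0) : (Fin N → ℝ) × ℝ)‖ < δ := by
      refine lt_of_le_of_lt ?_ hv
      rw [Prod.norm_def, Prod.norm_def]
      exact max_le (le_max_left _ _)
        (by simpa using le_trans (norm_nonneg v.1) (le_max_left ‖v.1‖ ‖v.2‖))
    have ha_r : ((v.1, 0) : (Fin N → ℝ) × ℝ) ∈ Metric.eball 0 r := hmem r hδr _ ha_norm
    have h1 : HasSum (fun k => p k (fun _ => v)) (v.2 * Φ (c + v)) := by
      have := hpr.hasSum hv_r
      simpa [hc] using this
    have h2 : HasSum (fun k => p k (fun _ => ((v.1, 0) : (Fin N → ℝ) × ℝ))) 0 := by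
      have := hpr.hasSum ha_r
      simpa [hc] using this
    have h1' : HasSum (fun k => p (k + 1) (fun _ : Fin (k + 1) => v)) (v.2 * Φ (c + v)) := by
      have h := (hasSum_nat_add_iff' (f := fun m => p m (fun _ => v)) 1).2 h1
      simpa [hp0] using h
    have h2' : HasSum
        (fun k => p (k + 1) (fun _ : Fin (k + 1) => ((v.1, 0) : (Fin N → ℝ) × ℝ))) 0 := by
      have h := (hasSum_nat_add_iff'
        (f := fun m => p m (fun _ => ((v.1, 0) : (Fin N → ℝ) × ℝ))) 1).2 h2
      simpa [hp0] using h
    have h3 : HasSum (fun k => Q p k (fun _ => v)) ((Q p).sum v) := (Q p).hasSum hv_q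
    have h4 : HasSum (fun k => v.2 * Q p k (fun _ => v)) (v.2 * (Q p).sum v) :=
      h3.mul_left _
    have h5 : HasSum (fun k => p (k + 1) (fun _ => v)
          - p (k + 1) (fun _ => ((v.1, 0) : (Fin N → ℝ) × ℝ)))
        (v.2 * Φ (c + v) - 0) := h1'.sub h2'
    have h6 : (fun k => v.2 * Q p k (fun _ => v))
        = fun k => p (k + 1) (fun _ => v)
          - p (k + 1) (fun _ => ((v.1, 0) : (Fin N → ℝ) × ℝ)) := by
      funext k; exact Q_apply_diag p k v
    rw [h6] at h4
    have := h4.unique h5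
    rw [this, sub_zero]
  have eq1 : ∀ z : (Fin N → ℝ) × ℝ, z ∈ Metric.ball c δ → z.2 ≠ 0 →
      Φ z = (Q p).sum (z - c) := by
    intro z hz hz2
    have hvn : ‖z - c‖ < δ := by
      rw [← dist_eq_norm]; exact Metric.mem_ball.1 hz
    have h := claimA (z - c) hvn
    have hcz : c + (z - c) = z := by abel
    have hv2 : (z - c).2 = z.2 := by simp [hc]
    rw [hcz, hv2] at h
    exact (mul_left_cancel₀ hz2 h).symm
  have eq2 : ∀ z ∈ Metric.ball c δ, Φ z = (Q p).sum (z - c) := by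
    intro z hz
    by_cases hz2 : z.2 = 0
    · set w : ℕ → (Fin N → ℝ) × ℝ := fun k => (z.1, δ / 2 * (1 / ((k : ℝ) + 1))) with hw
      have hzn : ‖z - c‖ < δ := by
        rw [← dist_eq_norm]; exact Metric.mem_ball.1 hz
      have hz1 : ‖z.1 - c.1‖ < δ := lt_of_le_of_lt (norm_fst_le (z - c)) hzn
      have hwpos : ∀ k : ℕ, 0 < δ / 2 * (1 / ((k : ℝ) + 1)) := fun k => by positivity
      have hwmem : ∀ k, w k ∈ Metric.ball c δ := by
        intro k
        rw [Metric.mem_ball, dist_eq_norm, Prod.norm_def]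
        refine max_lt ?_ ?_
        · exact hz1
        · have h2 : (w k - c).2 = δ / 2 * (1 / ((k : ℝ) + 1)) := by simp [hw, hc]
          rw [h2, Real.norm_eq_abs, abs_of_pos (hwpos k)]
          have h1k : (1 : ℝ) / ((k : ℝ) + 1) ≤ 1 := by
            rw [div_le_one (by positivity)]
            have : (0 : ℝ) ≤ (k : ℝ) := Nat.cast_nonneg k
            linarith
          have hle : δ / 2 * (1 / ((k : ℝ) + 1)) ≤ δ / 2 :=
            mul_le_of_le_one_right (by positivity) h1k
          exact lt_of_le_of_lt hle (half_lt_self hδpos)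
      have hw2 : ∀ k, (w k).2 ≠ 0 := fun k => ne_of_gt (hwpos k)
      have hzz : z = (z.1, (0 : ℝ)) := by rw [← hz2]
      have hwz : Tendsto w atTop (𝓝 z) := by
        rw [hzz]
        refine Tendsto.prodMk_nhds tendsto_const_nhds ?_
        have := tendsto_one_div_add_atTop_nhds_zero_nat.const_mul (δ / 2)
        simpa using this
      have hcontz : ContinuousAt Φ z :=
        hδ₂ z (Metric.ball_subset_ball (min_le_right δ₁ δ₂) hz)
      have hsum_cont : ContinuousAt (fun x : (Fin N → ℝ) × ℝ => (Q p).sum (x - c)) z := by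
        have hmb : z - c ∈ Metric.eball (0 : (Fin N → ℝ) × ℝ) (Q p).radius :=
          hmem _ hδq _ hzn
        have h1 : ContinuousAt (Q p).sum (z - c) :=
          ContinuousOn.continuousAt (FormalMultilinearSeries.continuousOn (p := Q p))
            (Metric.isOpen_eball.mem_nhds hmb)
        have hsubc : ContinuousAt (fun x : (Fin N → ℝ) × ℝ => x - c) z :=
          (continuous_id.sub continuous_const).continuousAt
        exact ContinuousAt.comp (g := (Q p).sum)
          (f := fun x : (Fin N → ℝ) × ℝ => x - c) h1 hsubc
      have l1 : Tendsto (fun k => Φ (w k)) atTop (𝓝 (Φ z)) := hcontz.tendsto.comp hwz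
      have l2 : Tendsto (fun k => (Q p).sum (w k - c)) atTop (𝓝 ((Q p).sum (z - c))) :=
        hsum_cont.tendsto.comp hwz
      have l3 : (fun k => Φ (w k)) = fun k => (Q p).sum (w k - c) := by
        funext k; exact eq1 (w k) (hwmem k) (hw2 k)
      rw [l3] at l1
      exact tendsto_nhds_unique l1 l2
    · exact eq1 z hz hz2
  have hQan : AnalyticAt ℝ (fun x : (Fin N → ℝ) × ℝ => (Q p).sum (x - c)) c := by
    have h0 : AnalyticAt ℝ (Q p).sum 0 := ((Q p).hasFPowerSeriesOnBall hq).analyticAt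
    have h0' : AnalyticAt ℝ (Q p).sum (c - c) := by
      rw [sub_self]; exact h0
    have hsub : AnalyticAt ℝ (fun x : (Fin N → ℝ) × ℝ => x - c) c :=
      analyticAt_id.sub analyticAt_const
    exact AnalyticAt.comp (g := (Q p).sum)
      (f := fun x : (Fin N → ℝ) × ℝ => x - c) h0' hsub
  refine hQan.congr ?_
  filter_upwards [Metric.ball_mem_nhds c hδpos] with z hz
  exact (eq2 z hz).symm

end Stmt3Aux

/-- If `Φ` is continuous near `(0,0) ∈ ℝ^N × ℝ` and `(x,y) ↦ y·Φ(x,y)` is real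
analytic in a neighbourhood of `(0,0)`, then `Φ` is real analytic near `(0,0)`. -/
theorem stmt3 (N : ℕ) (Φ : (Fin N → ℝ) × ℝ → ℝ)
    (hcont : ∃ U ∈ nhds ((0, 0) : (Fin N → ℝ) × ℝ), ContinuousOn Φ U)
    (hanal : ∃ V ∈ nhds ((0, 0) : (Fin N → ℝ) × ℝ),
      ∀ p ∈ V, AnalyticAt ℝ (fun q : (Fin N → ℝ) × ℝ => q.2 * Φ q) p) :
    ∃ W ∈ nhds ((0, 0) : (Fin N → ℝ) × ℝ), ∀ p ∈ W, AnalyticAt ℝ Φ p := by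
  obtain ⟨U, hUn, hUc⟩ := hcont
  obtain ⟨V, hVn, hVa⟩ := hanal
  refine ⟨interior U ∩ interior V, ?_, ?_⟩
  · exact Filter.inter_mem (interior_mem_nhds.2 hUn) (interior_mem_nhds.2 hVn)
  · rintro p ⟨hpU, hpV⟩
    have hfa : AnalyticAt ℝ (fun q : (Fin N → ℝ) × ℝ => q.2 * Φ q) p :=
      hVa p (interior_subset hpV)
    by_cases hp2 : p.2 = 0
    · refine Stmt3Aux.key hp2 ?_ hfa
      filter_upwards [isOpen_interior.mem_nhds hpU] with z hz
      exact hUc.continuousAt (mem_interior_iff_mem_nhds.1 hz)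
    · have hdiv : AnalyticAt ℝ (fun q : (Fin N → ℝ) × ℝ => (q.2 * Φ q) / q.2) p :=
        hfa.div analyticAt_snd hp2
      refine hdiv.congr ?_
      have hopen : IsOpen {q : (Fin N → ℝ) × ℝ | q.2 ≠ 0} :=
        isOpen_ne.preimage continuous_snd
      filter_upwards [hopen.mem_nhds hp2] with q hq
      exact mul_div_cancel_left₀ (Φ q) hq
end

section
/- Let f be smooth on an open interval I containing 0, let α ∈ ℝ \ ℤ_{≥0}, and let k ∈ ℤ_{≥0} with k > α. Writing T_0^{k−1}f(x) = Σ_{i=0}^{k−1} f^{(i)}(0) x^i / i! for the Taylor polynomial, the function ˆf(α,x) := Σ_{i=0}^{k−1} f^{(i)}(0) x^i / (i!(i−α)) + |x|^α ∫_0^x (f(s) − T_0^{k−1}f(s)) |s|^{−α} ds/s (with the integral term extended by its limit at x = 0) satisfies x ∂_x ˆf(α,x) − α ˆf(α,x) = f(x) for all x ∈ I \ {0}. -/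
open Set MeasureTheory in
section
open Set MeasureTheory

-- aux 1: iteratedDerivWithin = iteratedDeriv on unique-diff subsets of an open set where f is smooth
theorem aux_iter {f : ℝ → ℝ} {I : Set ℝ} (hI : IsOpen I) (hf : ContDiffOn ℝ (⊤ : ℕ∞) f I)
    {s : Set ℝ} (hs : UniqueDiffOn ℝ s) (hsI : s ⊆ I) (n : ℕ) {y : ℝ} (hy : y ∈ s) :
    iteratedDerivWithin n f s y = iteratedDeriv n f y := by
  have h1 := (hf.ftaylorSeriesWithin hI.uniqueDiffOn).mono hsI
  have h2 := h1.eq_iteratedFDerivWithin_of_uniqueDiffOn (m := n) (by exact_mod_cast le_top) hs hy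
  have h3 : ftaylorSeriesWithin ℝ f I y n = iteratedFDeriv ℝ n f y := by
    simp only [ftaylorSeriesWithin]
    exact iteratedFDerivWithin_of_isOpen n hI (hsI hy)
  rw [iteratedDerivWithin_eq_iteratedFDerivWithin, iteratedDeriv_eq_iteratedFDeriv, ← h2, h3]

-- positive-side remainder bound
theorem aux_pos {f : ℝ → ℝ} {I : Set ℝ} (hI : IsOpen I) (hf : ContDiffOn ℝ (⊤ : ℕ∞) f I)
    {k : ℕ} (hk : 1 ≤ k) {b : ℝ} (hb : 0 ≤ b) (hbI : Icc 0 b ⊆ I) :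
    ∃ C : ℝ, ∀ s ∈ Icc 0 b, |f s - ∑ i ∈ Finset.range k,
        iteratedDeriv i f 0 / (i.factorial : ℝ) * s ^ i| ≤ C * s ^ k := by
  rcases eq_or_lt_of_le hb with rfl | hb'
  · refine ⟨0, fun s hs => ?_⟩
    obtain rfl : s = 0 := le_antisymm hs.2 hs.1
    have : ∑ i ∈ Finset.range k, iteratedDeriv i f 0 / (i.factorial : ℝ) * (0:ℝ) ^ i = f 0 := by
      rw [Finset.sum_eq_single 0]
      · simp
      · intro i _ hi
        simp [zero_pow hi]
      · intro h; exact absurd (Finset.mem_range.2 hk) h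
    simp [this, zero_pow (by omega : k ≠ 0)]
  · have hud : UniqueDiffOn ℝ (Icc (0:ℝ) b) := uniqueDiffOn_Icc hb'
    have hfk : ContDiffOn ℝ k f (Icc 0 b) := (hf.of_le (by exact_mod_cast le_top)).mono hbI
    have hcont : ContinuousOn (iteratedDerivWithin k f (Icc 0 b)) (Icc 0 b) :=
      hfk.continuousOn_iteratedDerivWithin le_rfl hud
    obtain ⟨C, hC⟩ := isCompact_Icc.exists_bound_of_continuousOn hcont
    obtain ⟨n, rfl⟩ : ∃ n, k = n + 1 := ⟨k - 1, (Nat.succ_pred_eq_of_pos hk).symm⟩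
    refine ⟨C / n.factorial, fun s hs => ?_⟩
    have hT : taylorWithinEval f n (Icc 0 b) 0 s = ∑ i ∈ Finset.range (n+1),
        iteratedDeriv i f 0 / (i.factorial : ℝ) * s ^ i := by
      rw [taylor_within_apply]
      refine Finset.sum_congr rfl fun i _ => ?_
      rw [aux_iter hI hf hud hbI i (left_mem_Icc.2 hb)]
      rw [smul_eq_mul]
      ring
    have := taylor_mean_remainder_bound (n := n) hb (by exact_mod_cast hfk) hs hC
    rw [hT] at this
    calc |f s - ∑ i ∈ Finset.range (n+1), iteratedDeriv i f 0 / (i.factorial : ℝ) * s ^ i|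
        ≤ C * (s - 0) ^ (n+1) / n.factorial := this
      _ = C / n.factorial * s ^ (n+1) := by ring

theorem aux_bound {f : ℝ → ℝ} {I : Set ℝ} (hI : IsOpen I) (hI0 : (0:ℝ) ∈ I) (hf : ContDiffOn ℝ (⊤ : ℕ∞) f I)
    (k : ℕ) {y : ℝ} (hy : y ∈ I) (hconn : I.OrdConnected) :
    ∃ C : ℝ, 0 ≤ C ∧ ∀ s ∈ uIcc (0:ℝ) y, |f s - ∑ i ∈ Finset.range k,
        iteratedDeriv i f 0 / (i.factorial : ℝ) * s ^ i| ≤ C * |s| ^ k := by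
  have hsubI : uIcc (0:ℝ) y ⊆ I := hconn.uIcc_subset hI0 hy
  rcases Nat.eq_zero_or_pos k with rfl | hk
  · -- k = 0: bound f on compact
    obtain ⟨C, hC⟩ := isCompact_uIcc.exists_bound_of_continuousOn (hf.continuousOn.mono hsubI)
    refine ⟨max C 0, le_max_right _ _, fun s hs => ?_⟩
    simp only [Finset.range_zero, Finset.sum_empty, sub_zero, pow_zero, mul_one]
    simp only [Real.norm_eq_abs] at hC
    exact (hC s hs).trans (le_max_left _ _)
  · set a := min y 0 with ha
    set b := max y 0 with hb
    have hicc : uIcc (0:ℝ) y = Icc a b := by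
      rw [uIcc, min_comm, max_comm]
    have hbI : Icc (0:ℝ) b ⊆ I := fun t ht => hsubI (by
      rw [hicc]; exact ⟨le_trans (min_le_right y 0) ht.1, ht.2⟩)
    obtain ⟨C₁, hC₁⟩ := aux_pos hI hf hk (le_max_right y 0) hbI
    -- negative side via f ∘ neg
    have hJ : IsOpen (Neg.neg ⁻¹' I : Set ℝ) := hI.preimage continuous_neg
    have hfn : ContDiffOn ℝ (⊤ : ℕ∞) (fun t => f (-t)) (Neg.neg ⁻¹' I) :=
      hf.comp (contDiff_neg.contDiffOn) (fun t ht => ht)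
    have hnaI : Icc (0:ℝ) (-a) ⊆ Neg.neg ⁻¹' I := by
      intro t ht
      have : -t ∈ Icc a b := ⟨by linarith [ht.2], le_trans (by linarith [ht.1] : -t ≤ 0) (le_max_right y 0)⟩
      exact mem_preimage.2 (hsubI (hicc ▸ this))
    obtain ⟨C₂, hC₂⟩ := aux_pos hJ hfn hk (by simp [ha, le_max_iff]) hnaI
    refine ⟨max (max C₁ C₂) 0, le_max_right _ _, fun s hs => ?_⟩
    · rw [hicc] at hs
      rcases le_total 0 s with hs0 | hs0
      · have := hC₁ s ⟨hs0, hs.2⟩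
        rw [abs_of_nonneg hs0]
        refine this.trans ?_
        have h0 : (0:ℝ) ≤ s ^ k := pow_nonneg hs0 k
        nlinarith [le_trans (le_max_left C₁ C₂) (le_max_left (max C₁ C₂) 0)]
      · have hmem : -s ∈ Icc (0:ℝ) (-a) := ⟨by linarith, by linarith [hs.1]⟩
        have h2 := hC₂ (-s) hmem
        have hsum : ∑ i ∈ Finset.range k, iteratedDeriv i (fun t => f (-t)) 0 / (i.factorial : ℝ) * (-s) ^ i
            = ∑ i ∈ Finset.range k, iteratedDeriv i f 0 / (i.factorial : ℝ) * s ^ i := by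
          refine Finset.sum_congr rfl fun i _ => ?_
          rw [iteratedDeriv_comp_neg, neg_zero, smul_eq_mul]
          ring_nf
          simp [pow_mul']
        rw [neg_neg, hsum] at h2
        rw [abs_of_nonpos hs0]
        refine h2.trans ?_
        have h0 : (0:ℝ) ≤ (-s) ^ k := pow_nonneg (by linarith) k
        nlinarith [le_trans (le_max_right C₁ C₂) (le_max_left (max C₁ C₂) 0)]

theorem aux_absrpow {r : ℝ} (hr : -1 < r) (c : ℝ) :
    IntervalIntegrable (fun s : ℝ => |s| ^ r) MeasureTheory.volume 0 c := by
  rcases le_total 0 c with hc | hc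
  · rw [intervalIntegrable_iff, uIoc_of_le hc]
    have h1 : MeasureTheory.IntegrableOn (fun s : ℝ => s ^ r) (Set.Ioc 0 c) :=
      (intervalIntegral.intervalIntegrable_rpow' hr (a := 0) (b := c)).1
    refine h1.congr_fun ?_ measurableSet_Ioc
    intro s hs
    simp only
    rw [abs_of_pos hs.1]
  · rw [intervalIntegrable_iff, uIoc_of_ge hc]
    have h1 : IntervalIntegrable (fun s : ℝ => (-s) ^ r) MeasureTheory.volume 0 c := by
      have := (intervalIntegral.intervalIntegrable_rpow' hr (a := 0) (b := -c))
      rw [IntervalIntegrable.iff_comp_neg] at this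
      simpa using this
    rw [intervalIntegrable_iff, uIoc_of_ge hc] at h1
    refine h1.congr_fun ?_ measurableSet_Ioc
    intro s hs
    simp only
    rw [abs_of_nonpos hs.2]

set_option maxHeartbeats 1000000 in
open MeasureTheory in
theorem aux_int {f : ℝ → ℝ} {I : Set ℝ} (hI : IsOpen I) (hI0 : (0:ℝ) ∈ I)
    (hconn : I.OrdConnected) (hf : ContDiffOn ℝ (⊤ : ℕ∞) f I)
    {α : ℝ} {k : ℕ} (hk : α < k) {y : ℝ} (hy : y ∈ I) :
    IntervalIntegrable (fun s => (f s - ∑ i ∈ Finset.range k,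
        iteratedDeriv i f 0 / (i.factorial : ℝ) * s ^ i) * |s| ^ (-α) / s) volume 0 y := by
  obtain ⟨C, hC0, hC⟩ := aux_bound hI hI0 hf k hy hconn
  set T : ℝ → ℝ := fun s => ∑ i ∈ Finset.range k, iteratedDeriv i f 0 / (i.factorial : ℝ) * s ^ i with hT
  set g : ℝ → ℝ := fun s => (f s - T s) * |s| ^ (-α) / s with hg
  have hr : (-1 : ℝ) < (k : ℝ) - α - 1 := by linarith
  have hdom : IntervalIntegrable (fun s : ℝ => C * |s| ^ ((k:ℝ) - α - 1)) volume 0 y :=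
    (aux_absrpow hr y).const_mul C
  rw [intervalIntegrable_iff] at hdom ⊢
  -- measurability
  have hsubI : uIoc (0:ℝ) y ⊆ I := (Set.uIoc_subset_uIcc).trans (hconn.uIcc_subset hI0 hy)
  have hmeas : AEStronglyMeasurable g (volume.restrict (Set.uIoc 0 y)) := by
    have hfm : AEStronglyMeasurable f (volume.restrict (Set.uIoc 0 y)) :=
      (hf.continuousOn.mono hsubI).aestronglyMeasurable measurableSet_uIoc
    have h1 : AEStronglyMeasurable (fun s : ℝ => |s| ^ (-α) / s) (volume.restrict (Set.uIoc 0 y)) :=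
      Measurable.aestronglyMeasurable (by fun_prop)
    have h2 : AEStronglyMeasurable T (volume.restrict (Set.uIoc 0 y)) :=
      (continuous_finset_sum _ fun i _ => continuous_const.mul (continuous_pow i)).aestronglyMeasurable
    have heq : g = fun s => (f s - T s) * (|s| ^ (-α) / s) := by
      funext s; rw [hg]; ring
    rw [heq]
    exact (hfm.sub h2).mul h1
  refine MeasureTheory.Integrable.mono hdom hmeas ?_
  -- a.e. bound
  have h0 : ∀ᵐ s ∂(volume.restrict (Set.uIoc 0 y)), s ≠ 0 := by
    refine ae_restrict_of_ae ?_
    rw [ae_iff]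
    simp
  filter_upwards [h0, ae_restrict_mem measurableSet_uIoc] with s hs0 hsmem
  have hsI : s ∈ Set.uIcc 0 y := Set.uIoc_subset_uIcc hsmem
  have habs : (0:ℝ) < |s| := abs_pos.2 hs0
  rw [Real.norm_eq_abs, Real.norm_eq_abs, hg]
  rw [abs_div, abs_mul, abs_of_nonneg (Real.rpow_nonneg (abs_nonneg s) _)]
  have hb := hC s hsI
  have key : |f s - T s| * |s| ^ (-α) / |s| ≤ (C * |s|^k) * |s| ^ (-α) / |s| := by
    gcongr
  refine le_trans key (le_of_eq ?_)
  have h1 : (C * |s|^k) * |s| ^ (-α) / |s| = C * (|s|^(k:ℝ) * |s|^(-α) * |s|^(-1:ℝ)) := by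
    rw [Real.rpow_natCast, Real.rpow_neg_one]
    ring
  rw [h1, ← Real.rpow_add habs, ← Real.rpow_add habs]
  rw [abs_of_nonneg (by positivity : (0:ℝ) ≤ C * |s| ^ ((k:ℝ) - α - 1))]
  ring_nf

end

open scoped BigOperators
open Set MeasureTheory

/-- The explicit incomplete Mellin transform formula solves the singular ODE
`x ∂_x ˆf(α,x) − α ˆf(α,x) = f(x)` for `x ∈ I \ {0}`. -/
theorem stmt7 (I : Set ℝ) (hI : IsOpen I) (hI0 : (0 : ℝ) ∈ I) (hIconn : I.OrdConnected)
    (f : ℝ → ℝ) (hf : ContDiffOn ℝ (⊤ : ℕ∞) f I)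
    (α : ℝ) (hα : ∀ n : ℕ, α ≠ n) (k : ℕ) (hk : α < k) :
    ∀ x ∈ I, x ≠ 0 →
      x * deriv (fun y : ℝ =>
          (∑ i ∈ Finset.range k,
              iteratedDeriv i f 0 * y ^ i / ((i.factorial : ℝ) * ((i : ℝ) - α)))
            + |y| ^ α * ∫ s in (0 : ℝ)..y,
                (f s - ∑ i ∈ Finset.range k,
                    iteratedDeriv i f 0 / (i.factorial : ℝ) * s ^ i)
                  * |s| ^ (-α) / s) x
        - α * ((∑ i ∈ Finset.range k,
              iteratedDeriv i f 0 * x ^ i / ((i.factorial : ℝ) * ((i : ℝ) - α)))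
            + |x| ^ α * ∫ s in (0 : ℝ)..x,
                (f s - ∑ i ∈ Finset.range k,
                    iteratedDeriv i f 0 / (i.factorial : ℝ) * s ^ i)
                  * |s| ^ (-α) / s)
      = f x := by
  intro x hx hx0
  set T : ℝ → ℝ := fun s => ∑ i ∈ Finset.range k,
      iteratedDeriv i f 0 / (i.factorial : ℝ) * s ^ i with hTdef
  set g : ℝ → ℝ := fun s => (f s - T s) * |s| ^ (-α) / s with hgdef
  set F : ℝ → ℝ := fun y => ∫ s in (0:ℝ)..y, g s with hFdef
  have hU : IsOpen (I \ {0}) := hI.sdiff isClosed_singleton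
  have hxU : x ∈ I \ {0} := ⟨hx, hx0⟩
  -- continuity of g on I \ {0}
  have hgc : ContinuousOn g (I \ {0}) := by
    have h1 : ContinuousOn f (I \ {0}) := hf.continuousOn.mono diff_subset
    have h2 : ContinuousOn T (I \ {0}) :=
      (continuous_finset_sum _ fun i _ => continuous_const.mul (continuous_pow i)).continuousOn
    have h3 : ContinuousOn (fun s : ℝ => |s| ^ (-α)) (I \ {0}) := by
      intro s hs
      exact ((Real.continuousAt_rpow_const |s| (-α)
        (Or.inl (abs_ne_zero.2 hs.2))).comp continuous_abs.continuousAt).continuousWithinAt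
    exact ((h1.sub h2).mul h3).div continuousOn_id (fun s hs => hs.2)
  -- FTC derivative of F
  have hF : HasDerivAt F (g x) x := by
    refine intervalIntegral.integral_hasDerivAt_right (aux_int hI hI0 hIconn hf hk hx)
      (ContinuousOn.stronglyMeasurableAtFilter hU hgc x hxU) (hgc.continuousAt (hU.mem_nhds hxU))
  -- derivative of |y|^α
  have habs : HasDerivAt (fun y : ℝ => |y| ^ α) (α * |x| ^ α / x) x := by
    rcases lt_or_gt_of_ne hx0 with hneg | hpos
    · have h1 : HasDerivAt (fun y : ℝ => (-y) ^ α) (α * (-x) ^ (α - 1) * (-1)) x :=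
        (Real.hasDerivAt_rpow_const (Or.inl (by linarith : -x ≠ 0))).comp x (hasDerivAt_neg x)
      have heq : (fun y : ℝ => (-y) ^ α) =ᶠ[nhds x] fun y : ℝ => |y| ^ α := by
        filter_upwards [Iio_mem_nhds hneg] with y hy
        rw [abs_of_neg hy]
      have h2 := h1.congr_of_eventuallyEq heq.symm
      refine h2.congr_deriv (Eq.symm ?_)
      have hxpos : (0:ℝ) < -x := by linarith
      rw [abs_of_neg hneg, Real.rpow_sub hxpos, Real.rpow_one]
      field_simp
    · have h1 : HasDerivAt (fun y : ℝ => y ^ α) (α * x ^ (α - 1)) x :=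
        Real.hasDerivAt_rpow_const (Or.inl hx0)
      have heq : (fun y : ℝ => y ^ α) =ᶠ[nhds x] fun y : ℝ => |y| ^ α := by
        filter_upwards [Ioi_mem_nhds hpos] with y hy
        rw [abs_of_pos hy]
      have h2 := h1.congr_of_eventuallyEq heq.symm
      refine h2.congr_deriv (Eq.symm ?_)
      rw [abs_of_pos hpos, Real.rpow_sub hpos, Real.rpow_one]
      field_simp
  -- derivative of the polynomial part
  have hP : HasDerivAt (fun y : ℝ => ∑ i ∈ Finset.range k,
      iteratedDeriv i f 0 * y ^ i / ((i.factorial : ℝ) * ((i : ℝ) - α)))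
      (∑ i ∈ Finset.range k,
        iteratedDeriv i f 0 * ((i : ℝ) * x ^ (i - 1)) / ((i.factorial : ℝ) * ((i : ℝ) - α))) x := by
    refine HasDerivAt.fun_sum fun i _ => ?_
    exact ((hasDerivAt_pow i x).const_mul (iteratedDeriv i f 0)).div_const _
  -- assemble
  have hD : HasDerivAt (fun y : ℝ =>
      (∑ i ∈ Finset.range k,
          iteratedDeriv i f 0 * y ^ i / ((i.factorial : ℝ) * ((i : ℝ) - α)))
        + |y| ^ α * ∫ s in (0 : ℝ)..y,
            (f s - ∑ i ∈ Finset.range k,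
                iteratedDeriv i f 0 / (i.factorial : ℝ) * s ^ i)
              * |s| ^ (-α) / s)
      ((∑ i ∈ Finset.range k,
        iteratedDeriv i f 0 * ((i : ℝ) * x ^ (i - 1)) / ((i.factorial : ℝ) * ((i : ℝ) - α)))
        + ((α * |x| ^ α / x) * F x + |x| ^ α * g x)) x := hP.add (habs.mul hF)
  rw [hD.deriv]
  -- final algebra
  have habs0 : (0:ℝ) < |x| := abs_pos.2 hx0
  have hrp : (0:ℝ) < |x| ^ α := Real.rpow_pos_of_pos habs0 α
  have hTx : x * (∑ i ∈ Finset.range k,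
        iteratedDeriv i f 0 * ((i : ℝ) * x ^ (i - 1)) / ((i.factorial : ℝ) * ((i : ℝ) - α)))
      - α * (∑ i ∈ Finset.range k,
        iteratedDeriv i f 0 * x ^ i / ((i.factorial : ℝ) * ((i : ℝ) - α))) = T x := by
    rw [hTdef, Finset.mul_sum, Finset.mul_sum, ← Finset.sum_sub_distrib]
    refine Finset.sum_congr rfl fun i _ => ?_
    have hne : (i : ℝ) - α ≠ 0 := sub_ne_zero.2 fun h => hα i h.symm
    have hfac : (i.factorial : ℝ) ≠ 0 := Nat.cast_ne_zero.2 i.factorial_ne_zero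
    rcases Nat.eq_zero_or_pos i with rfl | hi
    · have hα0 : α ≠ 0 := fun h => hα 0 (by simp [h])
      simp only [Nat.cast_zero, pow_zero, Nat.factorial_zero, Nat.cast_one, zero_mul, mul_zero]
      field_simp
      ring
    · obtain ⟨n, rfl⟩ := Nat.exists_eq_succ_of_ne_zero hi.ne'
      have hD0 : ((n.succ.factorial : ℝ) * ((n.succ : ℝ) - α)) ≠ 0 := mul_ne_zero hfac hne
      rw [Nat.succ_sub_one, ← mul_div_assoc, ← mul_div_assoc, ← sub_div, div_mul_eq_mul_div,
        div_eq_div_iff hD0 hfac]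
      simp only [Nat.succ_eq_add_one]
      push_cast
      ring
  have hgx : x * (|x| ^ α * g x) = f x - T x := by
    rw [hgdef]
    simp only
    rw [Real.rpow_neg (abs_nonneg x)]
    field_simp
  have hA : x * ((α * |x| ^ α / x) * F x) = α * (|x| ^ α * F x) := by
    field_simp
  linear_combination hTx + hA + hgx
end

section
/- Let f be smooth on an open interval I containing 0 and let ˆf(α,x) denote the unique smooth solution of x ∂_x ˆf − α ˆf = f for α ∈ ℝ \ ℤ_{≥0}. Then for each i_0 ∈ ℤ_{≥0} and x_0 ∈ I, the function (α,x) ↦ (i_0 − α) ˆf(α,x) extends continuously (in fact smoothly) to (i_0, x_0), and its limit as (α,x) → (i_0,x_0) equals (f^{(i_0)}(0)/i_0!) x_0^{i_0}. -/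
open Set

lemma key_mono {φ ψ : ℝ → ℝ} {b : ℝ} (hb : 0 < b)
    (hφ : ContinuousOn φ (Icc 0 b)) (hψ : ContinuousOn ψ (Icc 0 b))
    (hd : ∀ x ∈ Ioo 0 b, ∃ d₁ d₂, HasDerivAt φ d₁ x ∧ HasDerivAt ψ d₂ x ∧ d₁ ≤ d₂) :
    φ b - φ 0 ≤ ψ b - ψ 0 := by
  have hanti : AntitoneOn (fun x => φ x - ψ x) (Icc 0 b) := by
    apply antitoneOn_of_deriv_nonpos (convex_Icc 0 b) (hφ.sub hψ)
    · rw [interior_Icc]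
      intro x hx
      obtain ⟨d₁, d₂, h₁, h₂, _⟩ := hd x hx
      exact (h₁.sub h₂).differentiableAt.differentiableWithinAt
    · rw [interior_Icc]
      intro x hx
      obtain ⟨d₁, d₂, h₁, h₂, hle⟩ := hd x hx
      rw [(h₁.sub h₂).deriv]
      linarith
  have := hanti (left_mem_Icc.2 hb.le) (right_mem_Icc.2 hb.le) hb.le
  dsimp at this
  linarith

/-- If `h 0 = 0` and `|h'| ≤ M x^n` on `(0,b)` then `|h b| ≤ M b^(n+1)`. -/

lemma bound_int {h : ℝ → ℝ} {M b : ℝ} {n : ℕ} (hb : 0 < b) (hM : 0 ≤ M)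
    (hcont : ContinuousOn h (Icc 0 b)) (h0 : h 0 = 0)
    (hd : ∀ x ∈ Ioo 0 b, ∃ d, HasDerivAt h d x ∧ |d| ≤ M * x ^ n) :
    |h b| ≤ M * b ^ (n + 1) := by
  have hψc : ContinuousOn (fun x : ℝ => M * x ^ (n + 1)) (Icc 0 b) := by fun_prop
  have hder : ∀ x ∈ Ioo (0:ℝ) b, HasDerivAt (fun x : ℝ => M * x ^ (n + 1))
      (M * ((n + 1) * x ^ n)) x := by
    intro x hx
    simpa using (hasDerivAt_pow (n+1) x).const_mul M
  have key : ∀ x ∈ Ioo (0:ℝ) b, ∀ d, HasDerivAt h d x → |d| ≤ M * ((n+1) * x ^ n) := by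
    intro x hx d hdx
    obtain ⟨d', hd', hle⟩ := hd x hx
    rw [hdx.unique hd']
    have hxn : 0 ≤ x ^ n := pow_nonneg hx.1.le n
    have hcast : (0:ℝ) ≤ (n:ℝ) := Nat.cast_nonneg n
    nlinarith [mul_nonneg (mul_nonneg hcast hM) hxn]
  have hub : h b - h 0 ≤ M * b ^ (n+1) - M * 0 ^ (n+1) := by
    apply key_mono hb hcont hψc
    intro x hx
    obtain ⟨d, hdx, hle⟩ := hd x hx
    exact ⟨d, _, hdx, hder x hx, le_trans (le_abs_self d) (key x hx d hdx)⟩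
  have hlb : (-h) b - (-h) 0 ≤ M * b ^ (n+1) - M * 0 ^ (n+1) := by
    apply key_mono hb hcont.neg hψc
    intro x hx
    obtain ⟨d, hdx, hle⟩ := hd x hx
    refine ⟨-d, _, hdx.neg, hder x hx, le_trans (neg_le_abs d) (key x hx d hdx)⟩
  simp only [h0, Pi.neg_apply, neg_zero, sub_zero, zero_pow (Nat.succ_ne_zero n), mul_zero] at hub hlb
  rw [abs_le]
  constructor <;> linarith

/-- ODE bound: if `x u' = β u + g` on `(0,b)`, `β<0`, `|g| ≤ C`, then `|u b| ≤ C / (-β)`. -/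

lemma bound_ode {u g : ℝ → ℝ} {β C b : ℝ} (hβ : β < 0) (hb : 0 < b) (hC : 0 ≤ C)
    (hu : ContinuousOn u (Icc 0 b))
    (hode : ∀ x ∈ Ioo 0 b, ∃ u', HasDerivAt u u' x ∧ x * u' = β * u x + g x)
    (hg : ∀ x ∈ Ioo 0 b, |g x| ≤ C) :
    |u b| ≤ C / (-β) := by
  have hnegβ : 0 < -β := by linarith
  set e : ℝ → ℝ := fun x => x ^ (-β) with he
  have hecont : ContinuousOn e (Icc 0 b) := by
    intro x hx
    exact (Real.continuousAt_rpow_const x (-β) (Or.inr hnegβ.le)).continuousWithinAt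
  have he0 : e 0 = 0 := Real.zero_rpow (ne_of_gt hnegβ)
  have hψc : ContinuousOn (fun x : ℝ => C / (-β) * e x) (Icc 0 b) := continuousOn_const.mul hecont
  have hφc : ContinuousOn (fun x : ℝ => u x * e x) (Icc 0 b) := hu.mul hecont
  have hφc' : ContinuousOn (fun x : ℝ => -u x * e x) (Icc 0 b) := hu.neg.mul hecont
  -- derivative facts on Ioo
  have hder : ∀ x ∈ Ioo (0:ℝ) b,
      HasDerivAt e (-β * x ^ (-β - 1)) x := by
    intro x hx
    exact Real.hasDerivAt_rpow_const (Or.inl (ne_of_gt hx.1))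
  have hend : ∀ x ∈ Ioo (0:ℝ) b, 0 ≤ x ^ (-β - 1) := fun x hx =>
    (Real.rpow_pos_of_pos hx.1 _).le
  have heval : ∀ x ∈ Ioo (0:ℝ) b, e x = x ^ (-β - 1) * x := by
    intro x hx
    have h1 : x ^ (-β - 1 + 1) = x ^ (-β - 1) * x := Real.rpow_add_one (ne_of_gt hx.1) _
    simpa [show -β - 1 + 1 = -β by ring] using h1
  have hψd : ∀ x ∈ Ioo (0:ℝ) b,
      HasDerivAt (fun x : ℝ => C / (-β) * e x) (C * x ^ (-β - 1)) x := by
    intro x hx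
    have := (hder x hx).const_mul (C / (-β))
    have hβ0 : β ≠ 0 := ne_of_lt hβ
    refine this.congr_deriv ?_
    rw [div_mul_eq_mul_div, div_eq_iff (neg_ne_zero.mpr hβ0)]
    ring
  have hφd : ∀ x ∈ Ioo (0:ℝ) b, ∃ d, HasDerivAt (fun x : ℝ => u x * e x) d x ∧
      d = g x * x ^ (-β - 1) := by
    intro x hx
    obtain ⟨u', hu', heq⟩ := hode x hx
    refine ⟨_, hu'.mul (hder x hx), ?_⟩
    rw [heval x hx]
    linear_combination x ^ (-β - 1) * heq
  have hub : u b * e b - u 0 * e 0 ≤ C / (-β) * e b - C / (-β) * e 0 := by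
    apply key_mono hb hφc hψc
    intro x hx
    obtain ⟨d, hdx, hdeq⟩ := hφd x hx
    refine ⟨d, _, hdx, hψd x hx, ?_⟩
    rw [hdeq]
    have := hg x hx
    nlinarith [hend x hx, abs_le.1 (hg x hx)]
  have hlb : -u b * e b - -u 0 * e 0 ≤ C / (-β) * e b - C / (-β) * e 0 := by
    apply key_mono hb hφc' hψc
    intro x hx
    obtain ⟨d, hdx, hdeq⟩ := hφd x hx
    refine ⟨-d, _, by simpa [neg_mul, Pi.neg_def] using hdx.neg, hψd x hx, ?_⟩
    rw [hdeq]
    nlinarith [hend x hx, abs_le.1 (hg x hx)]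
  rw [he0, mul_zero] at hub hlb
  have heb : 0 < e b := Real.rpow_pos_of_pos hb _
  have h1 : u b ≤ C / (-β) := (mul_le_mul_iff_left₀ heb).1 (by linarith)
  have h2 : -u b ≤ C / (-β) := (mul_le_mul_iff_left₀ heb).1 (by linarith)
  rw [abs_le]
  constructor <;> linarith

lemma poly_deriv (c : ℕ → ℝ) (m : ℕ) (y : ℝ) :
    HasDerivAt (fun x : ℝ => ∑ l ∈ Finset.range (m+1), c l * x ^ l / l.factorial)
      (∑ l ∈ Finset.range m, c (l+1) * y ^ l / l.factorial) y := by
  have h : HasDerivAt (fun x : ℝ => ∑ l ∈ Finset.range (m+1), c l * x ^ l / l.factorial)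
      (∑ l ∈ Finset.range (m+1), c l * (l * y ^ (l-1)) / l.factorial) y := by
    apply HasDerivAt.fun_sum
    intro l _
    have := (hasDerivAt_pow l y).const_mul (c l)
    simpa [mul_div_assoc] using this.div_const (l.factorial : ℝ)
  convert h using 1
  rw [Finset.sum_range_succ']
  simp only [Nat.factorial_zero, pow_zero, Nat.cast_zero, zero_mul, mul_zero, zero_div, add_zero,
    Nat.add_sub_cancel]
  apply Finset.sum_congr rfl
  intro l _
  have hfac : (((l+1).factorial : ℕ) : ℝ) = ((l:ℝ)+1) * (l.factorial : ℝ) := by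
    push_cast [Nat.factorial_succ]; ring
  rw [hfac]
  have h1 : (l:ℝ)+1 ≠ 0 := by positivity
  have h2 : (l.factorial : ℝ) ≠ 0 := by positivity
  push_cast
  field_simp

/-- Residue of the incomplete Mellin transform at nonnegative integer values of `α`:
if `F α` is, for each `α ∉ ℤ_{≥0}`, the smooth solution on `I` of `x y' − α y = f`,
then `(i₀ − α) F(α, x) → (f^{(i₀)}(0)/i₀!) x₀^{i₀}` as `(α, x) → (i₀, x₀)`. -/
theorem stmt8 (I : Set ℝ) (hI : IsOpen I) (hI0 : (0 : ℝ) ∈ I) (hIconn : I.OrdConnected)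
    (f : ℝ → ℝ) (hf : ContDiffOn ℝ (⊤ : ℕ∞) f I)
    (F : ℝ → ℝ → ℝ)
    (hFsmooth : ∀ α : ℝ, (∀ n : ℕ, α ≠ n) → ContDiffOn ℝ (⊤ : ℕ∞) (F α) I)
    (hFode : ∀ α : ℝ, (∀ n : ℕ, α ≠ n) → ∀ x ∈ I, x * deriv (F α) x - α * F α x = f x)
    (i₀ : ℕ) (x₀ : ℝ) (hx₀ : x₀ ∈ I) :
    Filter.Tendsto (fun p : ℝ × ℝ => ((i₀ : ℝ) - p.1) * F p.1 p.2)
      (nhdsWithin ((i₀ : ℝ), x₀) {p : ℝ × ℝ | (∀ n : ℕ, p.1 ≠ n) ∧ p.2 ∈ I})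
      (nhds (iteratedDeriv i₀ f 0 / (i₀.factorial : ℝ) * x₀ ^ i₀)) := by
  -- ### interval setup
  obtain ⟨A, B, hA, hB, hx₀AB, hABI⟩ :
      ∃ A B : ℝ, A < 0 ∧ 0 < B ∧ x₀ ∈ Ioo A B ∧ Icc A B ⊆ I := by
    set a := min 0 x₀ with ha
    set b := max 0 x₀ with hb
    have hab : a ≤ b := min_le_max
    have haI : a ∈ I := by rcases min_choice 0 x₀ with h | h <;> rw [ha, h] <;> assumption
    have hbI : b ∈ I := by rcases max_choice 0 x₀ with h | h <;> rw [hb, h] <;> assumption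
    have hIcc : Icc a b ⊆ I := hIconn.out haI hbI
    obtain ⟨δ, hδ, hsub⟩ := isCompact_Icc.exists_cthickening_subset_open hI hIcc
    refine ⟨a - δ, b + δ, ?_, ?_, ?_, ?_⟩
    · have : a ≤ 0 := min_le_left 0 x₀
      linarith
    · have : 0 ≤ b := le_max_left 0 x₀
      linarith
    · have h1 : a ≤ x₀ := min_le_right 0 x₀
      have h2 : x₀ ≤ b := le_max_right 0 x₀
      exact ⟨by linarith, by linarith⟩
    · intro y hy
      apply hsub
      have hz : max a (min y b) ∈ Icc a b := ⟨le_max_left _ _, max_le hab (min_le_right _ _)⟩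
      have hd : dist y (max a (min y b)) ≤ δ := by
        rw [Real.dist_eq, abs_le]
        rcases le_total y a with h1 | h1
        · rw [min_eq_left (le_trans h1 hab), max_eq_left h1]
          constructor <;> [linarith [hy.1]; linarith]
        · rcases le_total y b with h2 | h2
          · rw [min_eq_left h2, max_eq_right h1]
            simp
            linarith
          · rw [min_eq_right h2, max_eq_right hab]
            constructor <;> [linarith; linarith [hy.2]]
      exact Metric.closedBall_subset_cthickening hz δ (Metric.mem_closedBall.2 hd)
  have hA0B : (0:ℝ) ∈ Ioo A B := ⟨hA, hB⟩
  have h0AB : (0:ℝ) ∈ Icc A B := ⟨hA.le, hB.le⟩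
  -- ### smoothness of iterated derivatives
  have Df : ∀ n : ℕ, ContDiffOn ℝ (⊤ : ℕ∞) (iteratedDeriv n f) I := by
    intro n
    induction n with
    | zero => rwa [iteratedDeriv_zero]
    | succ n ih => rw [iteratedDeriv_succ]; exact ih.deriv_of_isOpen hI (by simp)
  have DF : ∀ α : ℝ, (∀ n : ℕ, α ≠ n) → ∀ n : ℕ, ContDiffOn ℝ (⊤ : ℕ∞) (iteratedDeriv n (F α)) I := by
    intro α hα n
    induction n with
    | zero => rw [iteratedDeriv_zero]; exact hFsmooth α hα
    | succ n ih => rw [iteratedDeriv_succ]; exact ih.deriv_of_isOpen hI (by simp)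
  have hasD : ∀ g : ℝ → ℝ, (∀ k : ℕ, ContDiffOn ℝ (⊤ : ℕ∞) (iteratedDeriv k g) I) →
      ∀ n : ℕ, ∀ x ∈ I, HasDerivAt (iteratedDeriv n g) (iteratedDeriv (n+1) g x) x := by
    intro g hg n x hx
    have hdiff : DifferentiableAt ℝ (iteratedDeriv n g) x :=
      ((hg n).differentiableOn (by simp)).differentiableAt (hI.mem_nhds hx)
    rw [iteratedDeriv_succ]
    exact hdiff.hasDerivAt
  -- ### ODE for iterated derivatives
  have hODE : ∀ α : ℝ, (∀ n : ℕ, α ≠ n) → ∀ n : ℕ, ∀ x ∈ I,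
      x * iteratedDeriv (n+1) (F α) x = (α - n) * iteratedDeriv n (F α) x + iteratedDeriv n f x := by
    intro α hα n
    induction n with
    | zero =>
      intro x hx
      have h := hFode α hα x hx
      simp only [zero_add, iteratedDeriv_one, iteratedDeriv_zero, Nat.cast_zero, sub_zero]
      linarith
    | succ n ih =>
      intro x hx
      have hL : HasDerivAt (fun y => y * iteratedDeriv (n+1) (F α) y)
          (iteratedDeriv (n+1) (F α) x + x * iteratedDeriv (n+2) (F α) x) x := by
        have := (hasDerivAt_id x).mul (hasD (F α) (DF α hα) (n+1) x hx)
        simpa [Pi.mul_def] using this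
      have hR : HasDerivAt (fun y => (α - n) * iteratedDeriv n (F α) y + iteratedDeriv n f y)
          ((α - n) * iteratedDeriv (n+1) (F α) x + iteratedDeriv (n+1) f x) x :=
        ((hasD (F α) (DF α hα) n x hx).const_mul _).add (hasD f Df n x hx)
      have heq : (fun y => y * iteratedDeriv (n+1) (F α) y)
          =ᶠ[nhds x] (fun y => (α - n) * iteratedDeriv n (F α) y + iteratedDeriv n f y) :=
        Filter.eventuallyEq_of_mem (hI.mem_nhds hx) (fun y hy => ih y hy)
      have hL' : HasDerivAt (fun y => (α - n) * iteratedDeriv n (F α) y + iteratedDeriv n f y)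
          (iteratedDeriv (n+1) (F α) x + x * iteratedDeriv (n+2) (F α) x) x :=
        hL.congr_of_eventuallyEq heq.symm
      have huniq := hL'.unique hR
      push_cast
      linarith
  -- ### values at 0
  have h0 : ∀ α : ℝ, (∀ n : ℕ, α ≠ n) → ∀ n : ℕ,
      ((n:ℝ) - α) * iteratedDeriv n (F α) 0 = iteratedDeriv n f 0 := by
    intro α hα n
    have := hODE α hα n 0 hI0
    rw [zero_mul] at this
    linarith
  -- ### uniform bound on the (i₀+1)-st derivative of f
  obtain ⟨C, hC⟩ := isCompact_Icc.exists_bound_of_continuousOn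
    ((Df (i₀+1)).continuousOn.mono hABI)
  simp only [Real.norm_eq_abs] at hC
  have hC0 : 0 ≤ C := le_trans (abs_nonneg _) (hC 0 h0AB)
  -- ### bound on (i₀+1)-st derivative of F α
  have hGb : ∀ α : ℝ, (∀ n : ℕ, α ≠ n) → |α - i₀| < 1/2 → ∀ x ∈ Icc A B,
      |iteratedDeriv (i₀+1) (F α) x| ≤ 2*C := by
    intro α hα hnear x hx
    set β : ℝ := α - (i₀+1) with hβdef
    have hβ : β < 0 := by
      have := abs_lt.1 hnear
      simp only [hβdef]
      push_cast
      linarith [this.2]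
    have hβhalf : 1/2 ≤ -β := by
      have := abs_lt.1 hnear
      simp only [hβdef]
      push_cast
      linarith [this.2]
    have hdivle : C / (-β) ≤ 2*C := by
      have h1 : C / (-β) ≤ C / (1/2) :=
        div_le_div_of_nonneg_left hC0 (by linarith) hβhalf
      rw [div_div_eq_mul_div, div_one] at h1
      linarith
    rcases lt_trichotomy x 0 with hx0 | hx0 | hx0
    · -- negative side, reflect
      have hsub : Icc x 0 ⊆ Icc A B := Icc_subset_Icc hx.1 hB.le
      have hmap : ∀ t ∈ Icc (0:ℝ) (-x), -t ∈ Icc A B := by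
        intro t ht
        exact hsub ⟨by linarith [ht.2], by linarith [ht.1]⟩
      have hcont : ContinuousOn (fun t => iteratedDeriv (i₀+1) (F α) (-t)) (Icc 0 (-x)) :=
        ((DF α hα (i₀+1)).continuousOn.mono hABI).comp continuous_neg.continuousOn hmap
      have hode' : ∀ t ∈ Ioo (0:ℝ) (-x), ∃ u', HasDerivAt (fun t => iteratedDeriv (i₀+1) (F α) (-t)) u' t ∧
          t * u' = β * iteratedDeriv (i₀+1) (F α) (-t) + iteratedDeriv (i₀+1) f (-t) := by
        intro t ht
        have htI : -t ∈ I := hABI (hmap t ⟨ht.1.le, ht.2.le⟩)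
        have hd := (hasD (F α) (DF α hα) (i₀+1) (-t) htI).comp t ((hasDerivAt_id t).neg)
        refine ⟨_, by simpa [Function.comp_def] using hd, ?_⟩
        have hode := hODE α hα (i₀+1) (-t) htI
        push_cast at hode ⊢
        simp only [hβdef]
        push_cast
        linarith
      have hgb : ∀ t ∈ Ioo (0:ℝ) (-x), |(fun t => iteratedDeriv (i₀+1) f (-t)) t| ≤ C := by
        intro t ht
        exact hC (-t) (hmap t ⟨ht.1.le, ht.2.le⟩)
      have key := bound_ode (u := fun t => iteratedDeriv (i₀+1) (F α) (-t))
        (g := fun t => iteratedDeriv (i₀+1) f (-t)) (b := -x)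
        hβ (by linarith) hC0 hcont hode' hgb
      simp only [neg_neg] at key
      linarith
    · -- x = 0
      subst hx0
      have h00 := h0 α hα (i₀+1)
      have hne : ((i₀:ℝ)+1) - α = -β := by rw [hβdef]; ring
      push_cast at h00
      have habs : |iteratedDeriv (i₀+1) (F α) 0| * (-β) ≤ C := by
        calc |iteratedDeriv (i₀+1) (F α) 0| * (-β)
            = |(((i₀:ℝ)+1) - α) * iteratedDeriv (i₀+1) (F α) 0| := by
              rw [abs_mul, hne, abs_of_pos (by linarith : (0:ℝ) < -β)]; ring
          _ = |iteratedDeriv (i₀+1) f 0| := by rw [h00]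
          _ ≤ C := hC 0 h0AB
      have : |iteratedDeriv (i₀+1) (F α) 0| ≤ C / (-β) := by
        rw [le_div_iff₀ (by linarith : (0:ℝ) < -β)]
        exact habs
      linarith
    · -- positive side
      have hsub : Icc 0 x ⊆ Icc A B := Icc_subset_Icc hA.le hx.2
      have hcont : ContinuousOn (iteratedDeriv (i₀+1) (F α)) (Icc 0 x) :=
        (DF α hα (i₀+1)).continuousOn.mono (fun t ht => hABI (hsub ht))
      have hode' : ∀ t ∈ Ioo (0:ℝ) x, ∃ u', HasDerivAt (iteratedDeriv (i₀+1) (F α)) u' t ∧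
          t * u' = β * iteratedDeriv (i₀+1) (F α) t + iteratedDeriv (i₀+1) f t := by
        intro t ht
        have htI : t ∈ I := hABI (hsub ⟨ht.1.le, ht.2.le⟩)
        refine ⟨_, hasD (F α) (DF α hα) (i₀+1) t htI, ?_⟩
        have hode := hODE α hα (i₀+1) t htI
        push_cast at hode ⊢
        simp only [hβdef]
        push_cast
        linarith
      have hgb : ∀ t ∈ Ioo (0:ℝ) x, |iteratedDeriv (i₀+1) f t| ≤ C := by
        intro t ht
        exact hC t (hsub ⟨ht.1.le, ht.2.le⟩)
      have key := bound_ode (u := iteratedDeriv (i₀+1) (F α))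
        (g := iteratedDeriv (i₀+1) f) (b := x) hβ hx0 hC0 hcont hode' hgb
      linarith
  -- ### Taylor-type estimate
  have hT : ∀ α : ℝ, (∀ n : ℕ, α ≠ n) → |α - i₀| < 1/2 → ∀ m : ℕ, m ≤ i₀ + 1 → ∀ x ∈ Icc A B,
      |iteratedDeriv (i₀+1-m) (F α) x
        - ∑ l ∈ Finset.range m, iteratedDeriv (i₀+1-m+l) (F α) 0 * x ^ l / l.factorial|
      ≤ 2*C * |x| ^ m := by
    intro α hα hnear m
    induction m with
    | zero =>
      intro _ x hx
      simpa using hGb α hα hnear x hx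
    | succ m ih =>
      intro hm x hx
      have hm' : m ≤ i₀ := Nat.lt_succ_iff.mp (Nat.lt_of_succ_le (Nat.succ_le_of_lt (Nat.lt_of_lt_of_le (Nat.lt_succ_self m) hm)))
      have IH := ih (Nat.le_succ_of_le hm')
      set j := i₀ - m with hj
      have hjm : i₀ + 1 - (m+1) = j := by omega
      have hjm1 : i₀ + 1 - m = j + 1 := by omega
      rw [hjm]
      rw [hjm1] at IH
      set c : ℕ → ℝ := fun l => iteratedDeriv (j+l) (F α) 0 with hc
      set hfun : ℝ → ℝ :=
        fun y => iteratedDeriv j (F α) y - ∑ l ∈ Finset.range (m+1), c l * y ^ l / l.factorial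
        with hhfun
      have hf0 : hfun 0 = 0 := by
        rw [hhfun]
        simp only [Finset.sum_range_succ']
        have hz : ∀ l ∈ Finset.range m, c (l+1) * (0:ℝ) ^ (l+1) / (l+1).factorial = 0 := by
          intro l _
          simp [zero_pow]
        rw [Finset.sum_congr rfl hz]
        simp [hc]
      have hcontpoly : Continuous (fun y : ℝ => ∑ l ∈ Finset.range (m+1), c l * y ^ l / l.factorial) := by
        apply continuous_finset_sum
        intro l _
        exact (continuous_const.mul (continuous_pow l)).div_const _
      have hfc : ContinuousOn hfun (Icc A B) :=
        ((DF α hα j).continuousOn.mono hABI).sub (hcontpoly.continuousOn)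
      have hidx : ∀ l : ℕ, j + (l+1) = j + 1 + l := by intro l; omega
      have hder : ∀ t ∈ I, HasDerivAt hfun
          (iteratedDeriv (j+1) (F α) t - ∑ l ∈ Finset.range m, c (l+1) * t ^ l / l.factorial) t :=
        fun t ht => (hasD (F α) (DF α hα) j t ht).sub (poly_deriv c m t)
      have hdb : ∀ t ∈ Icc A B,
          |iteratedDeriv (j+1) (F α) t - ∑ l ∈ Finset.range m, c (l+1) * t ^ l / l.factorial|
          ≤ 2*C * |t| ^ m := by
        intro t ht
        have h5 := IH t ht
        have hsumeq : ∑ l ∈ Finset.range m, c (l+1) * t ^ l / l.factorial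
            = ∑ l ∈ Finset.range m, iteratedDeriv (j+1+l) (F α) 0 * t ^ l / l.factorial := by
          apply Finset.sum_congr rfl
          intro l _
          have e1 : c (l+1) = iteratedDeriv (j+(l+1)) (F α) 0 := rfl
          rw [e1, show j+(l+1) = j+1+l by omega]
        rw [hsumeq]
        exact h5
      have hCC : (0:ℝ) ≤ 2*C := by linarith
      show |hfun x| ≤ 2*C * |x| ^ (m+1)
      rcases lt_trichotomy x 0 with hx0 | hx0 | hx0
      · -- reflect
        have hsub : ∀ t ∈ Icc (0:ℝ) (-x), -t ∈ Icc A B := by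
          intro t ht
          exact ⟨by linarith [ht.2, hx.1], by linarith [ht.1, hB.le]⟩
        have hres := bound_int (h := fun t => hfun (-t)) (M := 2*C) (b := -x) (n := m)
          (by linarith) hCC
          (hfc.comp continuous_neg.continuousOn hsub)
          (by simpa using hf0)
          ?_
        · have hxabs : |x| = -x := abs_of_neg hx0
          simp only [neg_neg] at hres
          rw [hxabs]
          exact hres
        · intro t ht
          have htI : -t ∈ I := hABI (hsub t ⟨ht.1.le, ht.2.le⟩)
          have hd := (hder (-t) htI).comp t ((hasDerivAt_id t).neg)
          refine ⟨(iteratedDeriv (j+1) (F α) (-t)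
              - ∑ l ∈ Finset.range m, c (l+1) * (-t) ^ l / l.factorial) * (-1), ?_, ?_⟩
          · exact hd
          · have := hdb (-t) (hsub t ⟨ht.1.le, ht.2.le⟩)
            rw [abs_neg] at this
            rw [abs_of_pos ht.1] at this
            rw [abs_mul, abs_neg, abs_one, mul_one]
            exact this
      · -- x = 0
        rw [hx0, hf0]
        simp
      · -- positive side
        have hsub : Icc (0:ℝ) x ⊆ Icc A B := Icc_subset_Icc hA.le hx.2
        have hres := bound_int (h := hfun) (M := 2*C) (b := x) (n := m) hx0 hCC
          (hfc.mono hsub) hf0 ?_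
        · rw [abs_of_pos hx0]
          exact hres
        · intro t ht
          have htI : t ∈ I := hABI (hsub ⟨ht.1.le, ht.2.le⟩)
          refine ⟨_, hder t htI, ?_⟩
          have := hdb t (hsub ⟨ht.1.le, ht.2.le⟩)
          rw [abs_of_pos ht.1] at this
          exact this
  -- ### explicit expansion of F
  have key : ∀ α : ℝ, (∀ n : ℕ, α ≠ n) → |α - i₀| < 1/2 → ∀ x ∈ Icc A B,
      |F α x - ∑ l ∈ Finset.range (i₀+1),
          iteratedDeriv l f 0 / (((l:ℝ) - α) * l.factorial) * x ^ l|
        ≤ 2*C * |x| ^ (i₀+1) := by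
    intro α hα hnear x hx
    have h1 := hT α hα hnear (i₀+1) le_rfl x hx
    have e0 : i₀ + 1 - (i₀+1) = 0 := by omega
    rw [e0] at h1
    simp only [iteratedDeriv_zero, zero_add] at h1
    have hrepl : ∀ l : ℕ, iteratedDeriv l (F α) 0 * x ^ l / l.factorial
        = iteratedDeriv l f 0 / (((l:ℝ) - α) * l.factorial) * x ^ l := by
      intro l
      have hval := h0 α hα l
      have hne : ((l:ℝ) - α) ≠ 0 := sub_ne_zero.2 (fun h => hα l h.symm)
      have hfact : (l.factorial : ℝ) ≠ 0 := by positivity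
      rw [show iteratedDeriv l (F α) 0 = iteratedDeriv l f 0 / ((l:ℝ) - α) by
        rw [eq_div_iff hne]; linear_combination hval]
      field_simp
      all_goals ring
    calc |F α x - ∑ l ∈ Finset.range (i₀+1),
          iteratedDeriv l f 0 / (((l:ℝ) - α) * l.factorial) * x ^ l|
        = |F α x - ∑ l ∈ Finset.range (i₀+1),
          iteratedDeriv l (F α) 0 * x ^ l / l.factorial| := by
          rw [Finset.sum_congr rfl (fun l _ => (hrepl l))]
      _ ≤ 2*C * |x| ^ (i₀+1) := h1
  -- ### final limit computation
  set pt : ℝ × ℝ := ((i₀:ℝ), x₀) with hpt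
  set S : Set (ℝ × ℝ) := {p : ℝ × ℝ | (∀ n : ℕ, p.1 ≠ n) ∧ p.2 ∈ I} with hS
  set L : ℝ := iteratedDeriv i₀ f 0 / (i₀.factorial : ℝ) * x₀ ^ i₀ with hL
  have hUnhds : {p : ℝ × ℝ | |p.1 - i₀| < 1/2 ∧ p.2 ∈ Ioo A B} ∈ nhdsWithin pt S := by
    apply mem_nhdsWithin_of_mem_nhds
    have hopen : IsOpen {p : ℝ × ℝ | |p.1 - i₀| < 1/2 ∧ p.2 ∈ Ioo A B} := by
      apply IsOpen.inter
      · exact isOpen_lt (continuous_fst.sub continuous_const).abs continuous_const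
      · exact isOpen_Ioo.preimage continuous_snd
    apply hopen.mem_nhds
    constructor
    · simp [hpt]
    · exact hx₀AB
  -- sum of the lower-order terms tends to 0
  have h1 : Filter.Tendsto (fun p : ℝ × ℝ => ∑ l ∈ Finset.range i₀,
      ((i₀:ℝ) - p.1) * (iteratedDeriv l f 0 / (((l:ℝ) - p.1) * l.factorial) * p.2 ^ l))
      (nhds pt) (nhds 0) := by
    have hsum : Filter.Tendsto (fun p : ℝ × ℝ => ∑ l ∈ Finset.range i₀,
        ((i₀:ℝ) - p.1) * (iteratedDeriv l f 0 / (((l:ℝ) - p.1) * l.factorial) * p.2 ^ l))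
        (nhds pt) (nhds (∑ l ∈ Finset.range i₀, (0:ℝ))) := by
      apply tendsto_finset_sum
      intro l hl
      have hlne : ((l:ℝ) - (i₀:ℝ)) * l.factorial ≠ 0 := by
        have ha : ((l:ℝ) - (i₀:ℝ)) ≠ 0 := by
          have hlt := Finset.mem_range.mp hl
          have hlt' : (l:ℝ) < (i₀:ℝ) := by exact_mod_cast hlt
          linarith
        have hb : (l.factorial : ℝ) ≠ 0 := by positivity
        exact mul_ne_zero ha hb
      have hca : ContinuousAt (fun p : ℝ × ℝ =>
          ((i₀:ℝ) - p.1) * (iteratedDeriv l f 0 / (((l:ℝ) - p.1) * l.factorial) * p.2 ^ l)) pt := by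
        apply ContinuousAt.mul
        · exact (continuous_const.sub continuous_fst).continuousAt
        · apply ContinuousAt.mul
          · refine ContinuousAt.div continuousAt_const
              (((continuous_const.sub continuous_fst).mul continuous_const).continuousAt) ?_
            have hpt1 : pt.1 = (i₀:ℝ) := rfl
            rw [hpt1]
            exact hlne
          · exact (continuous_snd.pow l).continuousAt
      have h00 : ((i₀:ℝ) - pt.1) * (iteratedDeriv l f 0 / (((l:ℝ) - pt.1) * l.factorial) * pt.2 ^ l)
          = 0 := by
        have hpt1 : pt.1 = (i₀:ℝ) := rfl
        rw [hpt1, sub_self, zero_mul]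
      have htd := hca.tendsto
      rw [h00] at htd
      exact htd
    simpa using hsum
  have h1' := h1.mono_left (nhdsWithin_le_nhds (s := S))
  -- the main term tends to L
  have h2 : Filter.Tendsto (fun p : ℝ × ℝ =>
      iteratedDeriv i₀ f 0 / (i₀.factorial : ℝ) * p.2 ^ i₀) (nhds pt) (nhds L) := by
    have hca : ContinuousAt (fun p : ℝ × ℝ =>
        iteratedDeriv i₀ f 0 / (i₀.factorial : ℝ) * p.2 ^ i₀) pt :=
      (continuous_const.mul (continuous_snd.pow i₀)).continuousAt
    simpa [hpt, hL] using hca.tendsto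
  have h2' := h2.mono_left (nhdsWithin_le_nhds (s := S))
  -- the remainder tends to 0
  have h3 : Filter.Tendsto (fun p : ℝ × ℝ => ((i₀:ℝ) - p.1) *
      (F p.1 p.2 - ∑ l ∈ Finset.range (i₀+1),
        iteratedDeriv l f 0 / (((l:ℝ) - p.1) * l.factorial) * p.2 ^ l))
      (nhdsWithin pt S) (nhds 0) := by
    set D : ℝ := 2*C * (|A| + |B|) ^ (i₀+1) with hD
    have hD0 : 0 ≤ D := by positivity
    have hbound : ∀ᶠ p in nhdsWithin pt S,
        ‖((i₀:ℝ) - p.1) * (F p.1 p.2 - ∑ l ∈ Finset.range (i₀+1),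
          iteratedDeriv l f 0 / (((l:ℝ) - p.1) * l.factorial) * p.2 ^ l)‖
          ≤ (fun p : ℝ × ℝ => |(i₀:ℝ) - p.1| * D) p := by
      filter_upwards [hUnhds, self_mem_nhdsWithin] with p hpU hpS
      have hp2 : p.2 ∈ Icc A B := ⟨hpU.2.1.le, hpU.2.2.le⟩
      have hnear : |p.1 - i₀| < 1/2 := hpU.1
      have hb := key p.1 hpS.1 hnear p.2 hp2
      have habs : |p.2| ≤ |A| + |B| := by
        rw [abs_le]
        constructor
        · have h1 := neg_abs_le A
          have h2 := abs_nonneg B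
          linarith [hp2.1]
        · have h1 := le_abs_self B
          have h2 := abs_nonneg A
          linarith [hp2.2]
      have hpow : |p.2| ^ (i₀+1) ≤ (|A| + |B|) ^ (i₀+1) :=
        pow_le_pow_left₀ (abs_nonneg _) habs _
      rw [Real.norm_eq_abs, abs_mul]
      have := mul_le_mul_of_nonneg_left hb (abs_nonneg ((i₀:ℝ) - p.1))
      have h4 : 2*C * |p.2| ^ (i₀+1) ≤ D := by
        rw [hD]
        have : (0:ℝ) ≤ 2*C := by linarith
        exact mul_le_mul_of_nonneg_left hpow this
      calc |(i₀:ℝ) - p.1| * |F p.1 p.2 - ∑ l ∈ Finset.range (i₀+1),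
            iteratedDeriv l f 0 / (((l:ℝ) - p.1) * l.factorial) * p.2 ^ l|
          ≤ |(i₀:ℝ) - p.1| * (2*C * |p.2| ^ (i₀+1)) := this
        _ ≤ |(i₀:ℝ) - p.1| * D := mul_le_mul_of_nonneg_left h4 (abs_nonneg _)
    have htd0 : Filter.Tendsto (fun p : ℝ × ℝ => |(i₀:ℝ) - p.1| * D)
        (nhdsWithin pt S) (nhds 0) := by
      have hca : ContinuousAt (fun p : ℝ × ℝ => |(i₀:ℝ) - p.1| * D) pt :=
        ((continuous_const.sub continuous_fst).abs.mul continuous_const).continuousAt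
      have hval : |(i₀:ℝ) - pt.1| * D = 0 := by
        have hpt1 : pt.1 = (i₀:ℝ) := rfl
        rw [hpt1, sub_self, abs_zero, zero_mul]
      have htd := hca.tendsto
      rw [hval] at htd
      exact htd.mono_left (nhdsWithin_le_nhds (s := S))
    exact squeeze_zero_norm' hbound htd0
  -- eventual equality
  have heq : (fun p : ℝ × ℝ => (∑ l ∈ Finset.range i₀,
      ((i₀:ℝ) - p.1) * (iteratedDeriv l f 0 / (((l:ℝ) - p.1) * l.factorial) * p.2 ^ l))
      + iteratedDeriv i₀ f 0 / (i₀.factorial : ℝ) * p.2 ^ i₀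
      + ((i₀:ℝ) - p.1) * (F p.1 p.2 - ∑ l ∈ Finset.range (i₀+1),
        iteratedDeriv l f 0 / (((l:ℝ) - p.1) * l.factorial) * p.2 ^ l))
      =ᶠ[nhdsWithin pt S] (fun p : ℝ × ℝ => ((i₀:ℝ) - p.1) * F p.1 p.2) := by
    filter_upwards [self_mem_nhdsWithin] with p hp
    have hne : ((i₀:ℝ) - p.1) ≠ 0 := sub_ne_zero.2 (fun h => hp.1 i₀ h.symm)
    have hsplit : ∑ l ∈ Finset.range (i₀+1),
        iteratedDeriv l f 0 / (((l:ℝ) - p.1) * l.factorial) * p.2 ^ l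
      = (∑ l ∈ Finset.range i₀,
        iteratedDeriv l f 0 / (((l:ℝ) - p.1) * l.factorial) * p.2 ^ l)
      + iteratedDeriv i₀ f 0 / (((i₀:ℝ) - p.1) * i₀.factorial) * p.2 ^ i₀ :=
      Finset.sum_range_succ _ _
    have hmain : ((i₀:ℝ) - p.1) * (iteratedDeriv i₀ f 0 / (((i₀:ℝ) - p.1) * i₀.factorial) * p.2 ^ i₀)
        = iteratedDeriv i₀ f 0 / (i₀.factorial : ℝ) * p.2 ^ i₀ := by
      have hfact : (i₀.factorial : ℝ) ≠ 0 := by positivity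
      field_simp
    rw [hsplit, ← Finset.mul_sum]
    linear_combination -hmain
  have total := (h1'.add h2').add h3
  have : (0 : ℝ) + L + 0 = L := by ring
  rw [this] at total
  exact total.congr' heq
end

section
/- Let h be C^K (K ≥ 3) on (a,b) × (−c,c) and let φ_2(t,(x,y)) be the second component of the flow of ∂_x + y h(x,y) ∂_y. With H(x,y) = exp(∫_y^x h(u,0) du), the second derivative ∂²_{yy} φ_2(t,(x,0)) equals 2 H(x+t, x) ∫_0^t H(x+v, x) ∂_2 h(x+v, 0) dv. -/
open Real

private noncomputable def pd (f : ℝ × ℝ → ℝ) (v : ℝ × ℝ) : ℝ × ℝ → ℝ := fun p => fderiv ℝ f p v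

private lemma pd_contDiff {n : ℕ} {f : ℝ × ℝ → ℝ} (hf : ContDiff ℝ (n + 1 : ℕ) f) (v : ℝ × ℝ) :
    ContDiff ℝ n (pd f v) := by
  have h1 : ContDiff ℝ n (fderiv ℝ f) := hf.fderiv_right (by norm_cast)
  exact h1.clm_apply contDiff_const

private lemma pd_hasDerivAt_snd {f : ℝ × ℝ → ℝ} {p : ℝ × ℝ} (hf : DifferentiableAt ℝ f p) :
    HasDerivAt (fun z => f (p.1, z)) (pd f (0, 1) p) p.2 := by
  have h1 : HasDerivAt (fun z : ℝ => ((p.1, z) : ℝ × ℝ)) ((0, 1) : ℝ × ℝ) p.2 :=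
    HasDerivAt.prodMk (hasDerivAt_const _ _) (hasDerivAt_id _)
  exact hf.hasFDerivAt.comp_hasDerivAt p.2 h1

private lemma pd_hasDerivAt_fst {f : ℝ × ℝ → ℝ} {p : ℝ × ℝ} (hf : DifferentiableAt ℝ f p) :
    HasDerivAt (fun s => f (s, p.2)) (pd f (1, 0) p) p.1 := by
  have h1 : HasDerivAt (fun s : ℝ => ((s, p.2) : ℝ × ℝ)) ((1, 0) : ℝ × ℝ) p.1 :=
    HasDerivAt.prodMk (hasDerivAt_id _) (hasDerivAt_const _ _)
  exact hf.hasFDerivAt.comp_hasDerivAt p.1 h1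

private lemma pd_comm {f : ℝ × ℝ → ℝ} (hf : ContDiff ℝ 2 f) (v w : ℝ × ℝ) (p : ℝ × ℝ) :
    pd (pd f v) w p = pd (pd f w) v p := by
  have hd : DifferentiableAt ℝ (fderiv ℝ f) p :=
    ((hf.fderiv_right (m := 1) (by norm_num)).differentiable (by norm_num)) p
  have key : ∀ z : ℝ × ℝ, HasFDerivAt (pd f z)
      ((ContinuousLinearMap.apply ℝ ℝ z).comp (fderiv ℝ (fderiv ℝ f) p)) p := fun z =>
    (ContinuousLinearMap.apply ℝ ℝ z).hasFDerivAt.comp p hd.hasFDerivAt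
  have e : ∀ z w' : ℝ × ℝ, pd (pd f z) w' p = fderiv ℝ (fderiv ℝ f) p w' z := by
    intro z w'
    show fderiv ℝ (pd f z) p w' = _
    rw [(key z).fderiv]
    rfl
  rw [e v w, e w v]
  exact second_derivative_symmetric
    (fun y => (hf.differentiable (by norm_num) y).hasFDerivAt) hd.hasFDerivAt w v

private lemma ode_zero_forward {f c : ℝ → ℝ} (hc : Continuous c)
    (hf : ∀ s, HasDerivAt f (f s * c s) s) (h0 : f 0 = 0) {t : ℝ} (ht : 0 ≤ t) : f t = 0 := by
  obtain ⟨C, hC⟩ :=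
    (isCompact_Icc (a := (0 : ℝ)) (b := t)).exists_bound_of_continuousOn hc.continuousOn
  have hfc : Continuous f := by
    rw [continuous_iff_continuousAt]; exact fun s => (hf s).continuousAt
  have key := norm_le_gronwallBound_of_norm_deriv_right_le (f := f)
    (f' := fun s => f s * c s) (δ := 0) (K := C) (ε := 0) (a := 0) (b := t)
    hfc.continuousOn (fun s _ => (hf s).hasDerivWithinAt)
    (by simp [h0])
    (fun s hs => by
      have h1 : ‖c s‖ ≤ C := hC s (Set.Ico_subset_Icc_self hs)
      have h2 : ‖f s * c s‖ = ‖f s‖ * ‖c s‖ := norm_mul _ _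
      have h3 : ‖f s‖ * ‖c s‖ ≤ C * ‖f s‖ := by
        rw [mul_comm]
        exact mul_le_mul_of_nonneg_right h1 (norm_nonneg _)
      simp only [add_zero]
      linarith)
  have h4 := key t (Set.mem_Icc.2 ⟨ht, le_rfl⟩)
  rw [gronwallBound_ε0_δ0] at h4
  exact norm_eq_zero.1 (le_antisymm h4 (norm_nonneg _))

private lemma ode_zero {f c : ℝ → ℝ} (hc : Continuous c)
    (hf : ∀ s, HasDerivAt f (f s * c s) s) (h0 : f 0 = 0) (t : ℝ) : f t = 0 := by
  rcases le_or_gt 0 t with ht | ht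
  · exact ode_zero_forward hc hf h0 ht
  · have hneg : ∀ s, HasDerivAt (fun s' => f (-s')) (f (-s) * (-c (-s))) s := by
      intro s
      have h1 : HasDerivAt (fun s' : ℝ => -s') (-1 : ℝ) s := (hasDerivAt_id s).neg
      have := (hf (-s)).comp s h1
      refine this.congr_deriv ?_
      ring
    have := ode_zero_forward (f := fun s => f (-s)) (c := fun s => -c (-s))
      ((hc.comp continuous_neg).neg) hneg (by simpa using h0) (t := -t) (by linarith)
    simpa using this

private lemma linear_ode {a r wf : ℝ → ℝ} {c : ℝ} (ha : Continuous a) (hr : Continuous r)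
    (hw : ∀ s, HasDerivAt wf (a s * wf s + r s) s) (h0 : wf 0 = c) (t : ℝ) :
    wf t = Real.exp (∫ s in (0:ℝ)..t, a s) *
      (c + ∫ s in (0:ℝ)..t, Real.exp (-∫ u in (0:ℝ)..s, a u) * r s) := by
  set A : ℝ → ℝ := fun s => ∫ u in (0:ℝ)..s, a u with hA
  have hA' : ∀ s, HasDerivAt A (a s) s := fun s => (ha.integral_hasStrictDerivAt 0 s).hasDerivAt
  have hAc : Continuous A := by
    rw [continuous_iff_continuousAt]; exact fun s => (hA' s).continuousAt
  have hint : Continuous (fun s => Real.exp (-A s) * r s) :=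
    ((Real.continuous_exp.comp hAc.neg).mul hr)
  set I : ℝ → ℝ := fun s => ∫ u in (0:ℝ)..s, Real.exp (-A u) * r u with hI
  have hI' : ∀ s, HasDerivAt I (Real.exp (-A s) * r s) s := fun s =>
    (hint.integral_hasStrictDerivAt 0 s).hasDerivAt
  set v : ℝ → ℝ := fun s => wf s * Real.exp (-A s) - I s with hv
  have hv' : ∀ s, HasDerivAt v 0 s := by
    intro s
    have h1 : HasDerivAt (fun s' => Real.exp (-A s')) (Real.exp (-A s) * (-a s)) s := by
      have := ((hA' s).neg).exp
      simpa using this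
    have h2 := ((hw s).mul h1).sub (hI' s)
    exact h2.congr_deriv (by ring)
  have hvd : Differentiable ℝ v := fun s => (hv' s).differentiableAt
  have hconst : v t = v 0 := is_const_of_deriv_eq_zero hvd (fun s' => (hv' s').deriv) t 0
  have hv0 : v 0 = c := by
    simp [hv, hI, hA, h0, intervalIntegral.integral_same]
  rw [hv0] at hconst
  have hexp : Real.exp (-A t) * Real.exp (A t) = 1 := by
    rw [← Real.exp_add]; simp
  have h2 : wf t * Real.exp (-A t) = c + I t := by
    have h3 : wf t * Real.exp (-A t) - I t = c := hconst
    linarith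
  calc wf t = wf t * (Real.exp (-A t) * Real.exp (A t)) := by rw [hexp]; ring
    _ = (wf t * Real.exp (-A t)) * Real.exp (A t) := by ring
    _ = (c + I t) * Real.exp (A t) := by rw [h2]
    _ = Real.exp (A t) * (c + I t) := by ring

/-- Second variational derivative of the flow of `∂_x + y h(x,y) ∂_y` along the
invariant line `{y = 0}`:
`∂²_{yy} φ₂(t,(x,0)) = 2 H(x+t,x) ∫_0^t H(x+v,x) ∂₂h(x+v,0) dv`,
where `H(x,y) = exp(∫_y^x h(u,0) du)`. -/
theorem stmt12 (K : ℕ) (hK : 3 ≤ K) (h : ℝ → ℝ → ℝ)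
    (hh : ContDiff ℝ K (fun p : ℝ × ℝ => h p.1 p.2))
    (φ₂ : ℝ → ℝ → ℝ → ℝ)
    (hφ₂smooth : ContDiff ℝ K (fun p : ℝ × ℝ × ℝ => φ₂ p.1 p.2.1 p.2.2))
    (hφ₂init : ∀ x y : ℝ, φ₂ 0 x y = y)
    (hφ₂ode : ∀ t x y : ℝ,
      HasDerivAt (fun τ => φ₂ τ x y) (φ₂ t x y * h (x + t) (φ₂ t x y)) t) :
    ∀ t x : ℝ,
      iteratedDeriv 2 (fun y => φ₂ t x y) 0
        = 2 * Real.exp (∫ u in x..(x + t), h u 0)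
            * ∫ v in (0 : ℝ)..t, Real.exp (∫ u in x..(x + v), h u 0)
                * deriv (fun y => h (x + v) y) 0 := by
  intro t x
  set F : ℝ × ℝ → ℝ := fun p => φ₂ p.1 x p.2 with hFdef
  set H2 : ℝ × ℝ → ℝ := fun p => h p.1 p.2 with hH2def
  have hF3 : ContDiff ℝ ((2:ℕ) + 1 : ℕ) F := by
    have h1 : ContDiff ℝ (K : ℕ) (fun p : ℝ × ℝ => φ₂ p.1 x p.2) :=
      hφ₂smooth.comp (contDiff_fst.prodMk (contDiff_const.prodMk contDiff_snd))
    exact h1.of_le (by exact_mod_cast hK)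
  have hH3 : ContDiff ℝ ((2:ℕ) + 1 : ℕ) H2 := hh.of_le (by exact_mod_cast hK)
  have hFd : Differentiable ℝ F := hF3.differentiable (by norm_num)
  have hF2 : ContDiff ℝ 2 F := hF3.of_le (by norm_cast)
  have hDyF : ContDiff ℝ ((1:ℕ) + 1 : ℕ) (pd F (0,1)) := by
    exact_mod_cast pd_contDiff (n := 2) hF3 _
  have hDyF2 : ContDiff ℝ 2 (pd F (0,1)) := by exact_mod_cast hDyF
  have hDyyF : ContDiff ℝ (1:ℕ) (pd (pd F (0,1)) (0,1)) := pd_contDiff (n := 1) hDyF _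
  have hDtF : ContDiff ℝ ((1:ℕ) + 1 : ℕ) (pd F (1,0)) := by
    exact_mod_cast pd_contDiff (n := 2) hF3 _
  have hHy : ContDiff ℝ (2:ℕ) (pd H2 (0,1)) := pd_contDiff (n := 2) hH3 _
  -- Step A: invariant line
  have hline : ∀ s : ℝ, F (s, 0) = 0 := by
    have hFc : Continuous fun s : ℝ => F (s, 0) :=
      hF3.continuous.comp (continuous_id.prodMk continuous_const)
    have hcont : Continuous (fun s => h (x + s) (F (s, 0))) :=
      hH3.continuous.comp ((continuous_const.add continuous_id).prodMk hFc)
    exact ode_zero hcont (fun s => hφ₂ode s x 0) (hφ₂init x 0)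
  -- Step B: time derivative identity
  have hDt : ∀ p : ℝ × ℝ, pd F (1,0) p = F p * h (x + p.1) (F p) := by
    intro p
    have h1 : HasDerivAt (fun s => F (s, p.2)) (pd F (1,0) p) p.1 := pd_hasDerivAt_fst (hFd p)
    have h2 : HasDerivAt (fun s => F (s, p.2)) (F p * h (x + p.1) (F p)) p.1 := hφ₂ode p.1 x p.2
    exact h1.unique h2
  set u : ℝ → ℝ := fun s => pd F (0,1) (s, 0) with hudef
  set w : ℝ → ℝ := fun s => pd (pd F (0,1)) (0,1) (s, 0) with hwdef
  set b : ℝ → ℝ := fun s => pd H2 (0,1) (x + s, 0) with hbdef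
  set a : ℝ → ℝ := fun s => h (x + s) 0 with hadef
  have hu0 : u 0 = 1 := by
    have h1 : HasDerivAt (fun z => F (0, z)) (u 0) 0 := pd_hasDerivAt_snd (hFd (0,0))
    have h2 : HasDerivAt (fun z : ℝ => F (0, z)) 1 0 := by
      have he : (fun z : ℝ => F (0, z)) = fun z => z := funext fun z => hφ₂init x z
      rw [he]; exact hasDerivAt_id 0
    exact h1.unique h2
  -- the chain-rule fact, used twice
  have hchain : ∀ s : ℝ, HasDerivAt (fun z => h (x + s) (F (s, z))) (u s * b s) 0 := by
    intro s
    have aF : HasDerivAt (fun z => F (s, z)) (u s) 0 := pd_hasDerivAt_snd (hFd (s, 0))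
    have hcurve : HasDerivAt (fun z : ℝ => ((x + s, F (s, z)) : ℝ × ℝ)) ((0, u s) : ℝ × ℝ) 0 :=
      HasDerivAt.prodMk (hasDerivAt_const _ _) aF
    have hcomp := (hH3.differentiable (by norm_num) (x + s, F (s, 0))).hasFDerivAt.comp_hasDerivAt 0 hcurve
    have heval : fderiv ℝ H2 (x + s, F (s, 0)) ((0, u s) : ℝ × ℝ) = u s * b s := by
      rw [hline s]
      have hsmul : ((0, u s) : ℝ × ℝ) = u s • ((0, 1) : ℝ × ℝ) := by simp
      rw [hsmul, (fderiv ℝ H2 (x + s, 0)).map_smul]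
      simp [pd, hbdef, smul_eq_mul]
    rw [heval] at hcomp
    exact hcomp
  have hu' : ∀ s, HasDerivAt u (a s * u s) s := by
    intro s
    have h1 : HasDerivAt u (pd (pd F (0,1)) (1,0) (s, 0)) s :=
      pd_hasDerivAt_fst ((hDyF2.differentiable (by norm_num)) (s, 0))
    rw [pd_comm hF2 _ _ _] at h1
    have h2 : HasDerivAt (fun z => pd F (1,0) (s, z)) (pd (pd F (1,0)) (0,1) (s, 0)) 0 :=
      pd_hasDerivAt_snd (((by exact_mod_cast hDtF : ContDiff ℝ 2 (pd F (1,0))).differentiable (by norm_num)) (s, 0))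
    have he : (fun z => pd F (1,0) (s, z)) = fun z => F (s, z) * h (x + s) (F (s, z)) :=
      funext fun z => hDt (s, z)
    rw [he] at h2
    have aF : HasDerivAt (fun z => F (s, z)) (u s) 0 := pd_hasDerivAt_snd (hFd (s, 0))
    have a3 := aF.mul (hchain s)
    have a4 : HasDerivAt (fun z => F (s, z) * h (x + s) (F (s, z))) (a s * u s) 0 := by
      refine a3.congr_deriv ?_
      simp only [hline s, hadef]
      ring
    rw [h2.unique a4] at h1
    exact h1
  have hacont : Continuous a := by
    rw [hadef]
    exact hH3.continuous.comp ((continuous_const.add continuous_id).prodMk continuous_const)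
  set E : ℝ → ℝ := fun s => Real.exp (∫ τ in (0:ℝ)..s, a τ) with hEdef
  have hu_eq : ∀ s, u s = E s := by
    intro s
    have h1 := linear_ode (r := fun _ => (0:ℝ)) hacont continuous_const
      (fun s' => by simpa using hu' s') hu0 s
    simp only [hEdef]
    simpa using h1
  have hA' : ∀ s, HasDerivAt (fun σ => ∫ τ in (0:ℝ)..σ, a τ) (a s) s := fun s =>
    (hacont.integral_hasStrictDerivAt 0 s).hasDerivAt
  have hEcont : Continuous E := by
    rw [hEdef]
    exact Real.continuous_exp.comp
      (by rw [continuous_iff_continuousAt]; exact fun s => (hA' s).continuousAt)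
  have hbcont : Continuous b := by
    rw [hbdef]
    exact hHy.continuous.comp ((continuous_const.add continuous_id).prodMk continuous_const)
  -- w initial value
  have hDyF_at0 : ∀ z : ℝ, pd F (0,1) (0, z) = 1 := by
    intro z
    have h1 : HasDerivAt (fun z' => F (0, z')) (pd F (0,1) (0, z)) z := pd_hasDerivAt_snd (hFd (0, z))
    have h2 : HasDerivAt (fun z' : ℝ => F (0, z')) 1 z := by
      have he : (fun z' : ℝ => F (0, z')) = fun z' => z' := funext fun z' => hφ₂init x z'
      rw [he]; exact hasDerivAt_id z
    exact h1.unique h2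
  have hw0 : w 0 = 0 := by
    have h1 : HasDerivAt (fun z => pd F (0,1) (0, z)) (w 0) 0 :=
      pd_hasDerivAt_snd ((hDyF2.differentiable (by norm_num)) (0, 0))
    have h2 : HasDerivAt (fun z : ℝ => pd F (0,1) (0, z)) 0 0 := by
      have he : (fun z : ℝ => pd F (0,1) (0, z)) = fun _ => (1:ℝ) := funext hDyF_at0
      rw [he]; exact hasDerivAt_const 0 1
    exact h1.unique h2
  -- pointwise formula for pd (pd F (1,0)) (0,1)
  have hQ : ∀ q : ℝ × ℝ, pd (pd F (1,0)) (0,1) q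
      = pd F (0,1) q * h (x + q.1) (F q)
        + F q * (pd F (0,1) q * pd H2 (0,1) (x + q.1, F q)) := by
    intro q
    have h2 : HasDerivAt (fun z => pd F (1,0) (q.1, z)) (pd (pd F (1,0)) (0,1) q) q.2 :=
      pd_hasDerivAt_snd (((by exact_mod_cast hDtF : ContDiff ℝ 2 (pd F (1,0))).differentiable (by norm_num)) q)
    have he : (fun z => pd F (1,0) (q.1, z)) = fun z => F (q.1, z) * h (x + q.1) (F (q.1, z)) :=
      funext fun z => hDt (q.1, z)
    rw [he] at h2
    have a1 : HasDerivAt (fun z => F (q.1, z)) (pd F (0,1) q) q.2 := pd_hasDerivAt_snd (hFd q)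
    have a2 : HasDerivAt (fun z => h (x + q.1) (F (q.1, z)))
        (pd F (0,1) q * pd H2 (0,1) (x + q.1, F q)) q.2 := by
      have hcurve : HasDerivAt (fun z : ℝ => ((x + q.1, F (q.1, z)) : ℝ × ℝ))
          ((0, pd F (0,1) q) : ℝ × ℝ) q.2 := HasDerivAt.prodMk (hasDerivAt_const _ _) a1
      have hcomp := (hH3.differentiable (by norm_num) (x + q.1, F q)).hasFDerivAt.comp_hasDerivAt q.2 hcurve
      have heval : fderiv ℝ H2 (x + q.1, F q) ((0, pd F (0,1) q) : ℝ × ℝ)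
          = pd F (0,1) q * pd H2 (0,1) (x + q.1, F q) := by
        have hsmul : ((0, pd F (0,1) q) : ℝ × ℝ) = pd F (0,1) q • ((0, 1) : ℝ × ℝ) := by simp
        rw [hsmul, (fderiv ℝ H2 (x + q.1, F q)).map_smul]
        simp [pd, smul_eq_mul]
      rw [heval] at hcomp
      exact hcomp
    exact h2.unique (a1.mul a2)
  -- second variational equation
  have hw' : ∀ s, HasDerivAt w (a s * w s + 2 * b s * E s ^ 2) s := by
    intro s
    have h1 : HasDerivAt w (pd (pd (pd F (0,1)) (0,1)) (1,0) (s, 0)) s :=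
      pd_hasDerivAt_fst ((hDyyF.differentiable (by norm_num)) (s, 0))
    rw [pd_comm hDyF2 _ _ _] at h1
    have hswap : pd (pd F (0,1)) (1,0) = pd (pd F (1,0)) (0,1) :=
      funext fun q => pd_comm hF2 _ _ q
    rw [hswap] at h1
    have hQc : ContDiff ℝ (1:ℕ) (pd (pd F (1,0)) (0,1)) := pd_contDiff (n := 1) hDtF _
    have h2 : HasDerivAt (fun z => pd (pd F (1,0)) (0,1) (s, z))
        (pd (pd (pd F (1,0)) (0,1)) (0,1) (s, 0)) 0 :=
      pd_hasDerivAt_snd ((hQc.differentiable (by norm_num)) (s, 0))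
    have he : (fun z => pd (pd F (1,0)) (0,1) (s, z))
        = fun z => pd F (0,1) (s, z) * h (x + s) (F (s, z))
          + F (s, z) * (pd F (0,1) (s, z) * pd H2 (0,1) (x + s, F (s, z))) :=
      funext fun z => hQ (s, z)
    rw [he] at h2
    -- direct computation at z = 0
    have a1 : HasDerivAt (fun z => pd F (0,1) (s, z)) (w s) 0 :=
      pd_hasDerivAt_snd ((hDyF2.differentiable (by norm_num)) (s, 0))
    have aF : HasDerivAt (fun z => F (s, z)) (u s) 0 := pd_hasDerivAt_snd (hFd (s, 0))
    have a4 : HasDerivAt (fun z => pd H2 (0,1) (x + s, F (s, z)))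
        (u s * pd (pd H2 (0,1)) (0,1) (x + s, 0)) 0 := by
      have hcurve : HasDerivAt (fun z : ℝ => ((x + s, F (s, z)) : ℝ × ℝ)) ((0, u s) : ℝ × ℝ) 0 :=
        HasDerivAt.prodMk (hasDerivAt_const _ _) aF
      have hcomp := ((hHy.differentiable (by norm_num)) (x + s, F (s, 0))).hasFDerivAt.comp_hasDerivAt 0 hcurve
      have heval : fderiv ℝ (pd H2 (0,1)) (x + s, F (s, 0)) ((0, u s) : ℝ × ℝ)
          = u s * pd (pd H2 (0,1)) (0,1) (x + s, 0) := by
        rw [hline s]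
        have hsmul : ((0, u s) : ℝ × ℝ) = u s • ((0, 1) : ℝ × ℝ) := by simp
        rw [hsmul, (fderiv ℝ (pd H2 (0,1)) (x + s, 0)).map_smul]
        simp [pd, smul_eq_mul]
      rw [heval] at hcomp
      exact hcomp
    have atotal := (a1.mul (hchain s)).add (aF.mul (a1.mul a4))
    have a5 : HasDerivAt (fun z => pd F (0,1) (s, z) * h (x + s) (F (s, z))
          + F (s, z) * (pd F (0,1) (s, z) * pd H2 (0,1) (x + s, F (s, z))))
        (a s * w s + 2 * b s * E s ^ 2) 0 := by
      refine atotal.congr_deriv ?_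
      simp only [Pi.mul_apply, hline s, hadef, ← hu_eq s]
      ring
    rw [h2.unique a5] at h1
    exact h1
  -- solve the second variational equation
  have hw_eq := linear_ode (r := fun s => 2 * b s * E s ^ 2) hacont ((continuous_const.mul hbcont).mul (hEcont.pow 2)) hw' hw0 t
  have hintegrand : ∀ s : ℝ, Real.exp (-∫ τ in (0:ℝ)..s, a τ) * (2 * b s * E s ^ 2)
      = 2 * (E s * b s) := by
    intro s
    simp only [hEdef]
    rw [Real.exp_neg]
    field_simp
  have e3 : (∫ s in (0:ℝ)..t, Real.exp (-∫ u in (0:ℝ)..s, a u) * (2 * b s * E s ^ 2))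
      = ∫ s in (0:ℝ)..t, 2 * (E s * b s) :=
    intervalIntegral.integral_congr (fun s _ => hintegrand s)
  rw [e3, intervalIntegral.integral_const_mul] at hw_eq
  -- identify the LHS with w t
  have e1 : deriv (fun y => φ₂ t x y) = fun y => pd F (0,1) (t, y) :=
    funext fun y => (pd_hasDerivAt_snd (p := ((t : ℝ), y)) (hFd (t, y))).deriv
  have hiter : iteratedDeriv 2 (fun y => φ₂ t x y) 0 = w t := by
    have h21 : (2:ℕ) = 1 + 1 := rfl
    rw [h21, iteratedDeriv_succ, iteratedDeriv_one, e1]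
    exact (pd_hasDerivAt_snd (p := ((t : ℝ), (0:ℝ))) ((hDyF2.differentiable (by norm_num)) (t, 0))).deriv
  -- change of variables in the integrals
  have hchg : ∀ s : ℝ, (∫ τ in (0:ℝ)..s, a τ) = ∫ u in x..(x + s), h u 0 := by
    intro s
    simp only [hadef]
    have := intervalIntegral.integral_comp_add_left (a := (0:ℝ)) (b := s) (fun u => h u 0) x
    simpa using this
  have hEv : ∀ s : ℝ, E s = Real.exp (∫ u in x..(x + s), h u 0) := by
    intro s
    simp only [hEdef]
    rw [hchg s]
  have hderivh : ∀ v : ℝ, deriv (fun y => h (x + v) y) 0 = b v := by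
    intro v
    exact (pd_hasDerivAt_snd (p := ((x + v : ℝ), (0:ℝ)))
      ((hH3.differentiable (by norm_num)) (x + v, 0))).deriv
  have h2 : (∫ v in (0:ℝ)..t, Real.exp (∫ u in x..(x + v), h u 0) * deriv (fun y => h (x + v) y) 0)
      = ∫ v in (0:ℝ)..t, E v * b v :=
    intervalIntegral.integral_congr (fun v _ => by rw [hderivh v, hEv v])
  rw [hiter, hw_eq, h2, ← hEv t]
  simp only [hEdef]
  ring
end
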